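/- arXiv:1303.0482 — 13 statements merged into one kernel-verified Lean document; each statement's English description precedes it below -/
import Mathlib

section
/- For every γ in the closed unit ball of ℂ with |γ| ≤ 1, the function G(z) = z₁/√(1 + γ·z₂²) is a well-defined holomorphic map from the Euclidean unit ball 𝔹₂ = {z ∈ ℂ² : |z₁|² + |z₂|² < 1} to the unit disc 𝔻, and G(λ, 0) = λ for all λ ∈ 𝔻. In particular, the complex geodesic λ ↦ (λ, 0) in 𝔹₂ has infinitely many distinct left inverses. -/
/-!
Since `‖γ w²‖ ≤ ‖w‖² < 1`, the number `1 + γ w²` lies in the slit plane, so the principal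
square root is holomorphic there, and `‖1 + γ w²‖ ≥ 1 - ‖w‖²`. Squaring,
`‖G z‖² = ‖z₁‖² / ‖1 + γ z₂²‖ ≤ ‖z₁‖² / (1 - ‖z₂‖²) < 1` on the ball. Distinct `γ` give distinct
maps, as `G_γ(1, 1)² = (1 + γ)⁻¹`, and the closed unit disc of parameters is infinite.
-/

open Complex Metric

def unitBall₂ : Set (ℂ × ℂ) := {z | ‖z.1‖ ^ 2 + ‖z.2‖ ^ 2 < 1}

def IsLeftInverseOnBall (F : ℂ × ℂ → ℂ) : Prop :=
  DifferentiableOn ℂ F unitBall₂ ∧ (∀ z ∈ unitBall₂, ‖F z‖ < 1) ∧ ∀ w : ℂ, ‖w‖ < 1 → F (w, 0) = w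

noncomputable def ballLeftInverse (γ : ℂ) (z : ℂ × ℂ) : ℂ :=
  z.1 / (1 + γ * z.2 ^ 2) ^ ((1 : ℂ) / 2)

lemma cpow_one_div_two_sq (a : ℂ) : (a ^ ((1 : ℂ) / 2)) ^ 2 = a := by
  rw [one_div, ← Nat.cast_ofNat, cpow_nat_inv_pow a two_ne_zero]

lemma sq_ballLeftInverse (γ : ℂ) (z : ℂ × ℂ) :
    ballLeftInverse γ z ^ 2 = z.1 ^ 2 / (1 + γ * z.2 ^ 2) := by
  rw [ballLeftInverse, div_pow, cpow_one_div_two_sq]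

section

variable {γ : ℂ}

lemma norm_mul_sq_le_norm_sq (hγ : ‖γ‖ ≤ 1) (w : ℂ) : ‖γ * w ^ 2‖ ≤ ‖w‖ ^ 2 := by
  rw [norm_mul, norm_pow]
  exact mul_le_of_le_one_left (by positivity) hγ

lemma one_sub_norm_sq_le_norm_one_add_mul_sq (hγ : ‖γ‖ ≤ 1) (w : ℂ) :
    1 - ‖w‖ ^ 2 ≤ ‖1 + γ * w ^ 2‖ := by
  have h := norm_sub_norm_le (1 : ℂ) (-(γ * w ^ 2))
  rw [norm_one, norm_neg, sub_neg_eq_add] at h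
  linarith [norm_mul_sq_le_norm_sq hγ w]

lemma one_add_mul_sq_mem_slitPlane (hγ : ‖γ‖ ≤ 1) {w : ℂ} (hw : ‖w‖ < 1) :
    1 + γ * w ^ 2 ∈ slitPlane :=
  mem_slitPlane_of_norm_lt_one <|
    (norm_mul_sq_le_norm_sq hγ w).trans_lt (pow_lt_one₀ (norm_nonneg w) hw two_ne_zero)

lemma differentiableAt_ballLeftInverse (hγ : ‖γ‖ ≤ 1) {z : ℂ × ℂ} (hz : ‖z.2‖ < 1) :
    DifferentiableAt ℂ (ballLeftInverse γ) z := by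
  have hA := one_add_mul_sq_mem_slitPlane hγ hz
  have hroot : DifferentiableAt ℂ (fun z : ℂ × ℂ => (1 + γ * z.2 ^ 2) ^ ((1 : ℂ) / 2)) z :=
    ((differentiableAt_const 1).add
      ((differentiableAt_const γ).mul (differentiableAt_snd.pow 2))).cpow
      (differentiableAt_const _) hA
  rw [show ballLeftInverse γ = fun z => z.1 * ((1 + γ * z.2 ^ 2) ^ ((1 : ℂ) / 2))⁻¹ from
    funext fun _ => div_eq_mul_inv _ _]
  have hroot_ne : (1 + γ * z.2 ^ 2) ^ ((1 : ℂ) / 2) ≠ 0 := by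
    simpa [cpow_eq_zero_iff] using slitPlane_ne_zero hA
  exact differentiableAt_fst.mul (hroot.inv hroot_ne)

lemma norm_snd_lt_one_of_mem_unitBall₂ {z : ℂ × ℂ} (hz : z ∈ unitBall₂) : ‖z.2‖ < 1 :=
  (sq_lt_one_iff₀ (norm_nonneg _)).mp (by nlinarith [sq_nonneg ‖z.1‖, hz.out])

lemma norm_ballLeftInverse_lt_one (hγ : ‖γ‖ ≤ 1) {z : ℂ × ℂ} (hz : z ∈ unitBall₂) :
    ‖ballLeftInverse γ z‖ < 1 := by
  have hden : ‖z.1‖ ^ 2 < ‖1 + γ * z.2 ^ 2‖ := by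
    linarith [hz.out, one_sub_norm_sq_le_norm_one_add_mul_sq hγ z.2]
  have hsq : ‖ballLeftInverse γ z‖ ^ 2 < 1 := by
    rw [← norm_pow, sq_ballLeftInverse, norm_div, norm_pow]
    exact (div_lt_one ((sq_nonneg _).trans_lt hden)).mpr hden
  exact (sq_lt_one_iff₀ (norm_nonneg _)).mp hsq

end

lemma ballLeftInverse_apply_zero_right (γ w : ℂ) : ballLeftInverse γ (w, 0) = w := by
  simp [ballLeftInverse]

lemma ballLeftInverse_injective : Function.Injective ballLeftInverse := by
  intro γ δ h
  have h11 := congrArg (· ^ 2) (congrFun h (1, 1))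
  simpa only [sq_ballLeftInverse, one_pow, mul_one, one_div, inv_inj, add_right_inj] using h11

lemma isLeftInverseOnBall_ballLeftInverse {γ : ℂ} (hγ : ‖γ‖ ≤ 1) :
    IsLeftInverseOnBall (ballLeftInverse γ) :=
  ⟨fun _ hz => (differentiableAt_ballLeftInverse hγ
      (norm_snd_lt_one_of_mem_unitBall₂ hz)).differentiableWithinAt,
    fun _ => norm_ballLeftInverse_lt_one hγ,
    fun w _ => ballLeftInverse_apply_zero_right γ w⟩

lemma infinite_closedBall_zero_one : (closedBall (0 : ℂ) 1).Infinite :=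
  infinite_of_mem_nhds 0 (closedBall_mem_nhds 0 one_pos)

/-- For every γ with |γ| ≤ 1, the function `G(z) = z₁ / √(1 + γ·z₂²)` (principal
branch, via `cpow`) is holomorphic on the Euclidean unit ball 𝔹₂ of ℂ², maps 𝔹₂
into the unit disc, and satisfies `G(w,0) = w`; in particular the complex geodesic
`w ↦ (w,0)` of 𝔹₂ has infinitely many distinct left inverses. -/
theorem ball_left_inverses (γ : ℂ) (hγ : ‖γ‖ ≤ 1) :
    DifferentiableOn ℂ (fun z : ℂ × ℂ => z.1 / (1 + γ * z.2 ^ 2) ^ ((1 : ℂ) / 2))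
      {z : ℂ × ℂ | ‖z.1‖ ^ 2 + ‖z.2‖ ^ 2 < 1} ∧
    (∀ z : ℂ × ℂ, ‖z.1‖ ^ 2 + ‖z.2‖ ^ 2 < 1 →
      ‖z.1 / (1 + γ * z.2 ^ 2) ^ ((1 : ℂ) / 2)‖ < 1) ∧
    (∀ w : ℂ, ‖w‖ < 1 → w / (1 + γ * (0 : ℂ) ^ 2) ^ ((1 : ℂ) / 2) = w) ∧
    {F : ℂ × ℂ → ℂ |
      DifferentiableOn ℂ F {z : ℂ × ℂ | ‖z.1‖ ^ 2 + ‖z.2‖ ^ 2 < 1} ∧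
      (∀ z : ℂ × ℂ, ‖z.1‖ ^ 2 + ‖z.2‖ ^ 2 < 1 → ‖F z‖ < 1) ∧
      (∀ w : ℂ, ‖w‖ < 1 → F (w, 0) = w)}.Infinite := by
  have hG := isLeftInverseOnBall_ballLeftInverse hγ
  refine ⟨hG.1, hG.2.1, hG.2.2, ?_⟩
  refine (infinite_closedBall_zero_one.image ballLeftInverse_injective.injOn).mono ?_
  rintro _ ⟨δ, hδ, rfl⟩
  exact isLeftInverseOnBall_ballLeftInverse (mem_closedBall_zero_iff.mp hδ)
end

section
/- Let h lie in the closed unit ball of H^∞(𝔻²) (i.e. h : 𝔻² → ℂ holomorphic with |h| ≤ 1) and let t ∈ [0,1]. Then the function F(z₁,z₂) = (t·z₁ + (1−t)·z₂ − z₁·z₂·h(z₁,z₂)) / (1 − ((1−t)·z₁ + t·z₂)·h(z₁,z₂)) is well defined (the denominator never vanishes on 𝔻²), maps 𝔻² into 𝔻, and satisfies F(λ, λ) = λ for all λ ∈ 𝔻. -/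
/-!
Write `F = N / D` with `N = t a + (1-t) b - a b c` and `D = 1 - ((1-t) a + t b) c`. Expanding
gives the sum-of-squares identity

  `|D|² - |N|² = t (1-|a|²) |1-bc|² + (1-t) (1-|b|²) |1-ac|² + t (1-t) (1-|c|²) |a-b|²`,

whose right-hand side is positive when `|a|, |b| < 1`, `|c| ≤ 1` and `t ∈ [0,1]`. Hence `|N| < |D|`,
which gives both `D ≠ 0` and `|F| < 1`; on the diagonal `N = w D`.
-/

open Complex

def retractNum (t : ℝ) (a b c : ℂ) : ℂ := t * a + (1 - t) * b - a * b * c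

def retractDen (t : ℝ) (a b c : ℂ) : ℂ := 1 - ((1 - t) * a + t * b) * c

theorem normSq_retractDen_sub_normSq_retractNum (t : ℝ) (a b c : ℂ) :
    normSq (retractDen t a b c) - normSq (retractNum t a b c) =
      t * (1 - normSq a) * normSq (1 - b * c) + (1 - t) * (1 - normSq b) * normSq (1 - a * c)
        + t * (1 - t) * (1 - normSq c) * normSq (a - b) := by
  simp only [retractNum, retractDen, normSq_apply, sub_re, sub_im, add_re, add_im, mul_re,
    mul_im, one_re, one_im, ofReal_re, ofReal_im]
  ring

theorem norm_retractNum_lt_norm_retractDen {t : ℝ} (ht : t ∈ Set.Icc (0 : ℝ) 1)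
    {a b c : ℂ} (ha : ‖a‖ < 1) (hb : ‖b‖ < 1) (hc : ‖c‖ ≤ 1) :
    ‖retractNum t a b c‖ < ‖retractDen t a b c‖ := by
  have one_sub_normSq_pos {z : ℂ} (hz : ‖z‖ < 1) : 0 < 1 - normSq z := by
    rw [normSq_eq_norm_sq, sub_pos]
    exact pow_lt_one₀ (norm_nonneg z) hz two_ne_zero
  have normSq_one_sub_mul_pos {z : ℂ} (hz : ‖z‖ < 1) : 0 < normSq (1 - z * c) := by
    refine normSq_pos.2 (sub_ne_zero.2 fun hzc => ?_)
    have : ‖z * c‖ < 1 := by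
      rw [norm_mul]; exact mul_lt_one_of_nonneg_of_lt_one_left (norm_nonneg z) hz hc
    rw [← hzc, norm_one] at this
    exact lt_irrefl _ this
  have convex_combo_pos : 0 < t * ((1 - normSq a) * normSq (1 - b * c))
      + (1 - t) * ((1 - normSq b) * normSq (1 - a * c)) :=
    convex_Ioi (0 : ℝ) (mul_pos (one_sub_normSq_pos ha) (normSq_one_sub_mul_pos hb))
      (mul_pos (one_sub_normSq_pos hb) (normSq_one_sub_mul_pos ha)) ht.1 (sub_nonneg.2 ht.2)
      (add_sub_cancel t 1)
  have cross_nonneg : 0 ≤ t * (1 - t) * (1 - normSq c) * normSq (a - b) := by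
    have : 0 ≤ 1 - normSq c := by
      rw [normSq_eq_norm_sq, sub_nonneg]; exact pow_le_one₀ (norm_nonneg c) hc
    exact mul_nonneg (mul_nonneg (mul_nonneg ht.1 (sub_nonneg.2 ht.2)) this) (normSq_nonneg _)
  have := normSq_retractDen_sub_normSq_retractNum t a b c
  rw [← sq_lt_sq₀ (norm_nonneg _) (norm_nonneg _), ← normSq_eq_norm_sq, ← normSq_eq_norm_sq]
  linarith

theorem retractDen_ne_zero {t : ℝ} (ht : t ∈ Set.Icc (0 : ℝ) 1) {a b c : ℂ} (ha : ‖a‖ < 1)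
    (hb : ‖b‖ < 1) (hc : ‖c‖ ≤ 1) : retractDen t a b c ≠ 0 :=
  norm_pos_iff.1 ((norm_nonneg _).trans_lt (norm_retractNum_lt_norm_retractDen ht ha hb hc))

theorem norm_retractNum_div_retractDen_lt_one {t : ℝ} (ht : t ∈ Set.Icc (0 : ℝ) 1) {a b c : ℂ}
    (ha : ‖a‖ < 1) (hb : ‖b‖ < 1) (hc : ‖c‖ ≤ 1) :
    ‖retractNum t a b c / retractDen t a b c‖ < 1 := by
  rw [norm_div, div_lt_one (norm_pos_iff.2 (retractDen_ne_zero ht ha hb hc))]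
  exact norm_retractNum_lt_norm_retractDen ht ha hb hc

theorem retractNum_diag (t : ℝ) (w c : ℂ) : retractNum t w w c = w * retractDen t w w c := by
  simp only [retractNum, retractDen]; ring

theorem retract_diagonal_formula_general (h : ℂ × ℂ → ℂ)
    (hbd : ∀ z : ℂ × ℂ, ‖z.1‖ < 1 → ‖z.2‖ < 1 → ‖h z‖ ≤ 1)
    (t : ℝ) (ht : t ∈ Set.Icc (0 : ℝ) 1) :
    (∀ z : ℂ × ℂ, ‖z.1‖ < 1 → ‖z.2‖ < 1 →
      1 - (((1 : ℂ) - t) * z.1 + (t : ℂ) * z.2) * h z ≠ 0) ∧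
    (∀ z : ℂ × ℂ, ‖z.1‖ < 1 → ‖z.2‖ < 1 →
      ‖((t : ℂ) * z.1 + (1 - (t : ℂ)) * z.2 - z.1 * z.2 * h z) /
        (1 - (((1 : ℂ) - t) * z.1 + (t : ℂ) * z.2) * h z)‖ < 1) ∧
    (∀ w : ℂ, ‖w‖ < 1 →
      ((t : ℂ) * w + (1 - (t : ℂ)) * w - w * w * h (w, w)) /
        (1 - (((1 : ℂ) - t) * w + (t : ℂ) * w) * h (w, w)) = w) :=
  ⟨fun z h₁ h₂ => retractDen_ne_zero ht h₁ h₂ (hbd z h₁ h₂),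
    fun z h₁ h₂ => norm_retractNum_div_retractDen_lt_one ht h₁ h₂ (hbd z h₁ h₂),
    fun w hw => by
      have hden := retractDen_ne_zero ht hw hw (hbd (w, w) hw hw)
      exact (div_eq_iff hden).2 (retractNum_diag t w (h (w, w)))⟩

/-- Agler–McCarthy description (converse direction): for `h` holomorphic on the
bidisc with `|h| ≤ 1` and `t ∈ [0,1]`, the function
`F(z₁,z₂) = (t z₁ + (1−t) z₂ − z₁ z₂ h(z₁,z₂)) / (1 − ((1−t) z₁ + t z₂) h(z₁,z₂))`
is well defined (its denominator never vanishes on 𝔻²), maps 𝔻² into 𝔻, and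
satisfies `F(w,w) = w` for all `w ∈ 𝔻`. -/
theorem retract_diagonal_formula (h : ℂ × ℂ → ℂ)
    (hhol : DifferentiableOn ℂ h {z : ℂ × ℂ | ‖z.1‖ < 1 ∧ ‖z.2‖ < 1})
    (hbd : ∀ z : ℂ × ℂ, ‖z.1‖ < 1 → ‖z.2‖ < 1 → ‖h z‖ ≤ 1)
    (t : ℝ) (ht : t ∈ Set.Icc (0 : ℝ) 1) :
    (∀ z : ℂ × ℂ, ‖z.1‖ < 1 → ‖z.2‖ < 1 →
      1 - (((1 : ℂ) - t) * z.1 + (t : ℂ) * z.2) * h z ≠ 0) ∧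
    (∀ z : ℂ × ℂ, ‖z.1‖ < 1 → ‖z.2‖ < 1 →
      ‖((t : ℂ) * z.1 + (1 - (t : ℂ)) * z.2 - z.1 * z.2 * h z) /
        (1 - (((1 : ℂ) - t) * z.1 + (t : ℂ) * z.2) * h z)‖ < 1) ∧
    (∀ w : ℂ, ‖w‖ < 1 →
      ((t : ℂ) * w + (1 - (t : ℂ)) * w - w * w * h (w, w)) /
        (1 - (((1 : ℂ) - t) * w + (t : ℂ) * w) * h (w, w)) = w) :=
  retract_diagonal_formula_general h hbd t ht
end

section
/- Let B(λ) = λ·(λ − α)/(1 − conj(α)·λ) with α ∈ 𝔻 \ {0}, and let σ ∈ 𝔻 \ {0}. Suppose φ : 𝔻 → 𝔻 is holomorphic with φ(0) = 0, φ(B(σ)) = σ² and φ(B(−σ)) = σ². Then a contradiction follows; i.e., no such φ exists. Equivalently, the three-point Nevanlinna–Pick problem (0,0)↦0, (B(σ),B(−σ))↦σ², (B(−σ),B(σ))↦σ² in the bidisc is strictly two-dimensional. -/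
/-!
Write `φ(B(z)) = z ψ(z)`. By the Schwarz lemma `ψ` maps the unit disc into the closed unit disc,
and the data say `ψ(σ) = σ`, `ψ(-σ) = -σ`, `ψ(α) = 0`. Conjugating by the disc automorphism that
sends `σ` to `0` turns the two fixed points into `0` and another fixed point, so the equality case
of the Schwarz lemma forces `ψ = id`; then `0 = ψ(α) = α`, a contradiction.
-/

open Complex ComplexConjugate Metric Set

namespace Complex

noncomputable def mobius (a z : ℂ) : ℂ := (z - a) / (1 - conj a * z)

variable {a z : ℂ}

theorem sq_norm_one_sub_conj_mul_sub_sq_norm_sub (a z : ℂ) :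
    ‖1 - conj a * z‖ ^ 2 - ‖z - a‖ ^ 2 = (1 - ‖a‖ ^ 2) * (1 - ‖z‖ ^ 2) := by
  simp only [← normSq_eq_norm_sq, normSq_apply, sub_re, sub_im, mul_re, mul_im, one_re, one_im,
    conj_re, conj_im]
  ring

theorem one_sub_conj_mul_ne_zero (ha : ‖a‖ < 1) (hz : ‖z‖ ≤ 1) : 1 - conj a * z ≠ 0 := by
  have hlt : ‖conj a * z‖ < 1 := by
    rw [norm_mul, RCLike.norm_conj]
    nlinarith [norm_nonneg a, norm_nonneg z]
  refine sub_ne_zero.2 fun h => ?_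
  rw [← h, norm_one] at hlt
  exact hlt.false

theorem norm_mobius_le (ha : ‖a‖ < 1) (hz : ‖z‖ ≤ 1) : ‖mobius a z‖ ≤ 1 := by
  rw [mobius, norm_div, div_le_one (norm_pos_iff.2 (one_sub_conj_mul_ne_zero ha hz)),
    ← pow_le_pow_iff_left₀ (norm_nonneg _) (norm_nonneg _) two_ne_zero]
  have ha2 : ‖a‖ ^ 2 < 1 := by nlinarith [norm_nonneg a]
  have hz2 : ‖z‖ ^ 2 ≤ 1 := by nlinarith [norm_nonneg z]
  linarith [sq_norm_one_sub_conj_mul_sub_sq_norm_sub a z,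
    mul_nonneg (sub_nonneg.2 ha2.le) (sub_nonneg.2 hz2)]

theorem norm_mobius_lt (ha : ‖a‖ < 1) (hz : ‖z‖ < 1) : ‖mobius a z‖ < 1 := by
  rw [mobius, norm_div, div_lt_one (norm_pos_iff.2 (one_sub_conj_mul_ne_zero ha hz.le)),
    ← pow_lt_pow_iff_left₀ (norm_nonneg _) (norm_nonneg _) two_ne_zero]
  have ha2 : ‖a‖ ^ 2 < 1 := by nlinarith [norm_nonneg a]
  have hz2 : ‖z‖ ^ 2 < 1 := by nlinarith [norm_nonneg z]
  linarith [sq_norm_one_sub_conj_mul_sub_sq_norm_sub a z,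
    mul_pos (sub_pos.2 ha2) (sub_pos.2 hz2)]

theorem mapsTo_mobius_ball (ha : ‖a‖ < 1) : MapsTo (mobius a) (ball 0 1) (ball 0 1) :=
  fun _ hz => mem_ball_zero_iff.2 (norm_mobius_lt ha (mem_ball_zero_iff.1 hz))

theorem mapsTo_mobius_closedBall (ha : ‖a‖ < 1) :
    MapsTo (mobius a) (closedBall 0 1) (closedBall 0 1) :=
  fun _ hz => mem_closedBall_zero_iff.2 (norm_mobius_le ha (mem_closedBall_zero_iff.1 hz))

@[simp]
theorem mobius_self (a : ℂ) : mobius a a = 0 := by simp [mobius]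

@[simp]
theorem mobius_neg_zero (a : ℂ) : mobius (-a) 0 = a := by simp [mobius]

theorem mobius_neg_mobius (ha : ‖a‖ < 1) (hz : ‖z‖ ≤ 1) : mobius (-a) (mobius a z) = z := by
  have hden : 1 - z * conj a ≠ 0 := mul_comm z (conj a) ▸ one_sub_conj_mul_ne_zero ha hz
  rw [mobius, div_eq_iff (one_sub_conj_mul_ne_zero (by rwa [norm_neg]) (norm_mobius_le ha hz)),
    mobius, map_neg]
  field_simp
  ring

theorem differentiableOn_mobius (ha : ‖a‖ < 1) :
    DifferentiableOn ℂ (mobius a) (closedBall 0 1) := fun _ hw =>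
  ((differentiableAt_id.sub_const a).div ((differentiableAt_const 1).sub
    (differentiableAt_id.const_mul _))
    (one_sub_conj_mul_ne_zero ha (mem_closedBall_zero_iff.1 hw))).differentiableWithinAt

theorem eqOn_id_of_mapsTo_closedBall_of_map_zero {f : ℂ → ℂ} {c : ℂ}
    (hf : DifferentiableOn ℂ f (ball 0 1)) (hmaps : MapsTo f (ball 0 1) (closedBall 0 1))
    (h0 : f 0 = 0) (hc : c ∈ ball 0 1) (hc0 : c ≠ 0) (hfc : f c = c) :
    EqOn f id (ball 0 1) := by
  have hslope : dslope f 0 c = 1 := by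
    rw [dslope_of_ne _ hc0, slope_def_field, hfc, h0, sub_zero, div_self hc0]
  have hmaps' : MapsTo f (ball 0 1) (closedBall (f 0) 1) := by rwa [h0]
  intro z hz
  simpa [h0, hslope] using
    affine_of_mapsTo_ball_of_norm_dslope_eq_div hf hmaps' hc (by simp [hslope]) hz

theorem eqOn_id_of_mapsTo_closedBall_of_fixed {f : ℂ → ℂ} {a b : ℂ}
    (hf : DifferentiableOn ℂ f (ball 0 1)) (hmaps : MapsTo f (ball 0 1) (closedBall 0 1))
    (ha : ‖a‖ < 1) (hb : ‖b‖ < 1) (hab : a ≠ b) (hfa : f a = a) (hfb : f b = b) :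
    EqOn f id (ball 0 1) := by
  have ha' : ‖-a‖ < 1 := by rwa [norm_neg]
  -- `mobius a` moves the fixed point `a` of `f` to `0`.
  set F : ℂ → ℂ := mobius a ∘ f ∘ mobius (-a)
  have hmaps' : MapsTo (f ∘ mobius (-a)) (ball 0 1) (closedBall 0 1) :=
    hmaps.comp (mapsTo_mobius_ball ha')
  have hF : DifferentiableOn ℂ F (ball 0 1) :=
    (differentiableOn_mobius ha).comp
      (hf.comp ((differentiableOn_mobius ha').mono ball_subset_closedBall)
        (mapsTo_mobius_ball ha')) hmaps'
  have hFmaps : MapsTo F (ball 0 1) (closedBall 0 1) := (mapsTo_mobius_closedBall ha).comp hmaps'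
  have hFid : EqOn F id (ball 0 1) := by
    refine eqOn_id_of_mapsTo_closedBall_of_map_zero hF hFmaps (by simp [F, hfa])
      (mapsTo_mobius_ball ha (mem_ball_zero_iff.2 hb)) (fun h => hab ?_) ?_
    · rw [← mobius_neg_mobius ha hb.le, h, mobius_neg_zero]
    · simp only [F, Function.comp_apply, mobius_neg_mobius ha hb.le, hfb]
  intro z hz
  have hz' := mem_ball_zero_iff.1 hz
  calc f z = mobius (-a) (F (mobius a z)) := by
        simp only [F, Function.comp_apply, mobius_neg_mobius ha hz'.le,
          mobius_neg_mobius ha (mem_closedBall_zero_iff.1 (hmaps hz))]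
    _ = z := by
        rw [hFid (mapsTo_mobius_ball ha hz), id, mobius_neg_mobius ha hz'.le]

theorem mapsTo_mul_mobius_ball (ha : ‖a‖ < 1) :
    MapsTo (fun z => z * mobius a z) (ball 0 1) (ball 0 1) := fun z hz => by
  rw [mem_ball_zero_iff] at hz ⊢
  rw [norm_mul]
  exact mul_lt_one_of_nonneg_of_lt_one_left (norm_nonneg z) hz (norm_mobius_lt ha hz).le

theorem differentiableOn_mul_mobius (ha : ‖a‖ < 1) :
    DifferentiableOn ℂ (fun z => z * mobius a z) (ball 0 1) :=
  differentiableOn_id.mul ((differentiableOn_mobius ha).mono ball_subset_closedBall)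

theorem mapsTo_dslope_zero_closedBall {g : ℂ → ℂ} (hg : DifferentiableOn ℂ g (ball 0 1))
    (hmaps : MapsTo g (ball 0 1) (ball 0 1)) (h0 : g 0 = 0) :
    MapsTo (dslope g 0) (ball 0 1) (closedBall 0 1) := fun z hz => by
  have hmaps' : MapsTo g (ball 0 1) (closedBall (g 0) 1) := by
    rw [h0]
    exact hmaps.mono_right ball_subset_closedBall
  simpa using norm_dslope_le_div_of_mapsTo_ball hg hmaps' hz

end Complex

/-- Let `B(w) = w(w − α)/(1 − conj(α) w)` with `α ∈ 𝔻 \ {0}` and let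
`σ ∈ 𝔻 \ {0}`. There is no holomorphic `φ : 𝔻 → 𝔻` with `φ(0) = 0`,
`φ(B(σ)) = σ²` and `φ(B(−σ)) = σ²`; i.e. the corresponding three-point
Nevanlinna–Pick problem in the bidisc is strictly two-dimensional. -/
theorem no_one_dimensional_solution (α σ : ℂ)
    (hα : ‖α‖ < 1) (hα0 : α ≠ 0) (hσ : ‖σ‖ < 1) (hσ0 : σ ≠ 0)
    (φ : ℂ → ℂ)
    (hhol : DifferentiableOn ℂ φ {z : ℂ | ‖z‖ < 1})
    (hmaps : ∀ z : ℂ, ‖z‖ < 1 → ‖φ z‖ < 1)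
    (h0 : φ 0 = 0)
    (h1 : φ (σ * (σ - α) / (1 - (starRingEnd ℂ) α * σ)) = σ ^ 2)
    (h2 : φ ((-σ) * (-σ - α) / (1 - (starRingEnd ℂ) α * (-σ))) = σ ^ 2) :
    False := by
  have hφ : DifferentiableOn ℂ φ (ball 0 1) := by
    rwa [show ball (0 : ℂ) 1 = {z : ℂ | ‖z‖ < 1} by ext; simp]
  have hφmaps : MapsTo φ (ball 0 1) (ball 0 1) := fun z hz =>
    mem_ball_zero_iff.2 (hmaps z (mem_ball_zero_iff.1 hz))
  set g : ℂ → ℂ := φ ∘ fun z => z * mobius α z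
  have hgmaps : MapsTo g (ball 0 1) (ball 0 1) := hφmaps.comp (mapsTo_mul_mobius_ball hα)
  have hg : DifferentiableOn ℂ g (ball 0 1) :=
    hφ.comp (differentiableOn_mul_mobius hα) (mapsTo_mul_mobius_ball hα)
  have hg0 : g 0 = 0 := by simp [g, h0]
  have hslope : ∀ z ≠ 0, dslope g 0 z = g z / z := fun z hz => by
    rw [dslope_of_ne _ hz, slope_def_field, hg0, sub_zero, sub_zero]
  have hψσ : dslope g 0 σ = σ := by
    rw [hslope σ hσ0, div_eq_iff hσ0, ← sq]
    simpa only [g, Function.comp_apply, mobius, mul_div_assoc] using h1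
  have hψnegσ : dslope g 0 (-σ) = -σ := by
    rw [hslope (-σ) (neg_ne_zero.2 hσ0), div_eq_iff (neg_ne_zero.2 hσ0), neg_mul_neg, ← sq]
    simpa only [g, Function.comp_apply, mobius, mul_div_assoc] using h2
  have hψ_id : EqOn (dslope g 0) id (ball 0 1) :=
    eqOn_id_of_mapsTo_closedBall_of_fixed
      ((differentiableOn_dslope (ball_mem_nhds _ one_pos)).2 hg)
      (mapsTo_dslope_zero_closedBall hg hgmaps hg0) hσ (by rwa [norm_neg]) (self_ne_neg.2 hσ0)
      hψσ hψnegσ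
  have hgα : g α = 0 := by simp [g, h0]
  have hψα := hψ_id (mem_ball_zero_iff.2 hα)
  rw [hslope α hα0, hgα, zero_div] at hψα
  exact hα0 hψα.symm
end

section
/- Let α ∈ 𝔻 \ {0} and σ ∈ 𝔻 \ {0}. Then |σ| < max(|(σ − α)/(1 − conj(α)σ)|, |(σ + α)/(1 + conj(α)σ)|). Equivalently, at most one of the points α, −α lies in the closed hyperbolic disc centered at σ of hyperbolic radius equal to the hyperbolic distance from 0 to σ. -/
/-- For `α, σ ∈ 𝔻 \ {0}` one has
`|σ| < max(|(σ − α)/(1 − conj(α)σ)|, |(σ + α)/(1 + conj(α)σ)|)`: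
at most one of `α, −α` lies in the closed pseudo-hyperbolic disc centered at σ
of radius `|σ|`. -/
theorem pseudohyperbolic_max_gt (α σ : ℂ)
    (hα : ‖α‖ < 1) (hα0 : α ≠ 0) (hσ : ‖σ‖ < 1) (hσ0 : σ ≠ 0) :
    ‖σ‖ < max ‖(σ - α) / (1 - (starRingEnd ℂ) α * σ)‖
              ‖(σ + α) / (1 + (starRingEnd ℂ) α * σ)‖ := by
  by_contra h
  push_neg at h
  obtain ⟨h1, h2⟩ := max_le_iff.mp h
  set w := (starRingEnd ℂ) α * σ with hw
  have hwlt : ‖w‖ < 1 := by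
    calc ‖w‖ = ‖α‖ * ‖σ‖ := by simp [hw]
    _ < 1 := by nlinarith [norm_nonneg α, norm_nonneg σ]
  have hd1 : (1 : ℂ) - w ≠ 0 := by
    intro hc
    have : (1 : ℂ) = w := by linear_combination hc
    rw [← this] at hwlt; simp at hwlt
  have hd2 : (1 : ℂ) + w ≠ 0 := by
    intro hc
    have : w = -1 := by linear_combination hc
    rw [this] at hwlt; simp at hwlt
  rw [norm_div, div_le_iff₀ (norm_pos_iff.mpr hd1)] at h1
  rw [norm_div, div_le_iff₀ (norm_pos_iff.mpr hd2)] at h2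
  have hA : Complex.normSq (σ - α) ≤ Complex.normSq σ * Complex.normSq (1 - w) := by
    have := mul_le_mul h1 h1 (norm_nonneg _) (by positivity)
    have e : ∀ z : ℂ, Complex.normSq z = ‖z‖ * ‖z‖ := by
      intro z; rw [Complex.normSq_eq_norm_sq]; ring
    rw [e, e, e]; nlinarith [this]
  have hB : Complex.normSq (σ + α) ≤ Complex.normSq σ * Complex.normSq (1 + w) := by
    have := mul_le_mul h2 h2 (norm_nonneg _) (by positivity)
    have e : ∀ z : ℂ, Complex.normSq z = ‖z‖ * ‖z‖ := by
      intro z; rw [Complex.normSq_eq_norm_sq]; ring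
    rw [e, e, e]; nlinarith [this]
  have hαpos : 0 < Complex.normSq α := Complex.normSq_pos.mpr hα0
  have hσlt : Complex.normSq σ < 1 := by
    have : Complex.normSq σ = ‖σ‖ * ‖σ‖ := by
      rw [Complex.normSq_eq_norm_sq]; ring
    nlinarith [norm_nonneg σ]
  have key1 : Complex.normSq (σ - α) + Complex.normSq (σ + α)
      = 2 * (Complex.normSq σ + Complex.normSq α) := by
    simp [Complex.normSq_apply, Complex.sub_re, Complex.sub_im, Complex.add_re,
      Complex.add_im]; ring
  have key2 : Complex.normSq (1 - w) + Complex.normSq (1 + w)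
      = 2 * (1 + Complex.normSq w) := by
    simp [Complex.normSq_apply, Complex.sub_re, Complex.sub_im, Complex.add_re,
      Complex.add_im]; ring
  have key3 : Complex.normSq w = Complex.normSq α * Complex.normSq σ := by
    simp [hw, Complex.normSq_mul]
  have h1s : 0 < 1 - Complex.normSq σ * Complex.normSq σ := by
    nlinarith [Complex.normSq_nonneg σ]
  nlinarith [hA, hB, key1, key2, key3, mul_pos hαpos h1s]
end

section
/- Let a(λ) = τ·(λ − α)/(1 − conj(α)·λ) be a Möbius self-map of 𝔻 with |τ| = 1 and α ∈ 𝔻. Then a(λ) ≠ λ for every λ ∈ 𝔻 if and only if |1 − τ| ≤ 2|α|. -/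
/-!
A fixed point `w` of `a` solves `conj α * w ^ 2 + (τ - 1) * w - τ * α = 0`. Writing `τ = s ^ 2`
with `‖s‖ = 1` and substituting `u = conj α / s * w` turns this into
`u ^ 2 + 2 i σ u - ‖α‖ ^ 2 = 0` with `σ = s.im`, the disc `‖w‖ < 1` into `‖u‖ < ‖α‖`, and
`‖1 - τ‖` into `2 |σ|`. Completing the square, the roots off the imaginary axis have `‖u‖ = ‖α‖`,
while a root `u = y i` solves `y ^ 2 + 2 σ y + ‖α‖ ^ 2 = 0`, which has a root with `|y| < ‖α‖`
exactly when `‖α‖ < |σ|`.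
-/

open Complex ComplexConjugate

theorem exists_abs_lt_root_iff {σ r : ℝ} (hr : 0 < r) :
    (∃ y : ℝ, |y| < r ∧ y ^ 2 + 2 * σ * y + r ^ 2 = 0) ↔ r < |σ| := by
  constructor
  · rintro ⟨y, hy, hroot⟩
    have hy0 : y ≠ 0 := by rintro rfl; nlinarith
    have hσy : |y| * (2 * |σ|) = y ^ 2 + r ^ 2 := by
      rw [← abs_two, ← abs_mul, ← abs_mul, show y * (2 * σ) = -(y ^ 2 + r ^ 2) by linarith,
        abs_neg, abs_of_nonneg (by positivity)]
    -- `y ^ 2 + r ^ 2 > 2 r |y|` since `|y| ≠ r`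
    nlinarith [abs_pos.mpr hy0, sq_abs y]
  · intro hσ
    wlog hσ0 : 0 ≤ σ generalizing σ
    · obtain ⟨y, hy, hroot⟩ := this (σ := -σ) (by rwa [abs_neg]) (by linarith)
      exact ⟨-y, by rwa [abs_neg], by linarith⟩
    rw [abs_of_nonneg hσ0] at hσ
    set c := Real.sqrt (σ ^ 2 - r ^ 2)
    have hc : c ^ 2 = σ ^ 2 - r ^ 2 := Real.sq_sqrt (by nlinarith)
    have hc0 : 0 ≤ c := Real.sqrt_nonneg _
    exact ⟨c - σ, abs_lt.mpr ⟨by nlinarith, by nlinarith⟩, by linear_combination hc⟩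

theorem exists_norm_lt_root_iff {σ r : ℝ} (hr : 0 < r) :
    (∃ u : ℂ, ‖u‖ < r ∧ u ^ 2 + 2 * I * σ * u - r ^ 2 = 0) ↔ r < |σ| := by
  rw [← exists_abs_lt_root_iff hr]
  constructor
  · rintro ⟨u, hu, hroot⟩
    have hre := congrArg re hroot
    have him := congrArg im hroot
    simp only [sq, sub_re, add_re, mul_re, re_ofNat, I_re, mul_zero, im_ofNat, I_im, mul_one,
      sub_self, ofReal_re, zero_mul, mul_im, add_zero, ofReal_im, zero_add, zero_sub, sub_zero,
      zero_re, sub_im, add_im, zero_im] at hre him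
    have hnorm : u.re * u.re + u.im * u.im < r * r := by
      rw [← normSq_apply, ← Complex.sq_norm, ← sq]
      exact pow_lt_pow_left₀ hu (norm_nonneg u) two_ne_zero
    have hre0 : u.re = 0 := by
      rcases mul_eq_zero.mp (show u.re * (u.im + σ) = 0 by linarith) with h | h
      · exact h
      · rw [show u.im = -σ by linarith] at hre hnorm
        linarith
    refine ⟨u.im, (abs_im_le_norm u).trans_lt hu, ?_⟩
    rw [hre0] at hre
    linarith
  · rintro ⟨y, hy, hroot⟩
    refine ⟨y * I, by simpa using hy, ?_⟩
    linear_combination (-1 : ℂ) * (by exact_mod_cast hroot : (y : ℂ) ^ 2 + 2 * σ * y + r ^ 2 = 0)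
      + (y ^ 2 + 2 * σ * y : ℂ) * I_sq

theorem norm_one_sub_sq_of_norm_eq_one {s : ℂ} (hs : ‖s‖ = 1) : ‖1 - s ^ 2‖ = 2 * |s.im| := by
  have hconj : s * conj s = 1 := by rw [mul_conj', hs]; simp
  have hfactor : 1 - s ^ 2 = -s * ((2 * s.im : ℝ) * I) := by
    rw [← sub_conj]; linear_combination -hconj
  rw [hfactor, norm_mul, norm_neg, hs, one_mul, norm_mul, norm_I, mul_one, norm_real,
    Real.norm_eq_abs, abs_mul, abs_two]

theorem mobius_eq_self_iff {τ α w : ℂ} (hα : ‖α‖ < 1) (hw : ‖w‖ < 1) :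
    τ * (w - α) / (1 - conj α * w) = w ↔ conj α * w ^ 2 + (τ - 1) * w - τ * α = 0 := by
  have hlt : ‖conj α * w‖ < 1 := by
    rw [norm_mul, norm_conj]
    exact mul_lt_one_of_nonneg_of_lt_one_left (norm_nonneg _) hα hw.le
  have hden : 1 - conj α * w ≠ 0 := sub_ne_zero.mpr fun h => by simp [← h] at hlt
  rw [div_eq_iff hden]
  constructor <;> intro h <;> linear_combination h

theorem quadratic_scale_iff {s α : ℂ} (hs : ‖s‖ = 1) (hα : α ≠ 0) (w : ℂ) :
    conj α * w ^ 2 + (s ^ 2 - 1) * w - s ^ 2 * α = 0 ↔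
      (conj α / s * w) ^ 2 + 2 * I * s.im * (conj α / s * w) - ‖α‖ ^ 2 = 0 := by
  have hs0 : s ≠ 0 := ne_zero_of_norm_ne_zero (hs ▸ one_ne_zero)
  have hconj : conj s = s⁻¹ := eq_inv_of_mul_eq_one_right (by rw [mul_conj', hs]; simp)
  have him : 2 * I * s.im = s - s⁻¹ := by rw [← hconj, sub_conj]; push_cast; ring
  have hscale : (conj α / s * w) ^ 2 + 2 * I * s.im * (conj α / s * w) - ‖α‖ ^ 2 =
      conj α / s ^ 2 * (conj α * w ^ 2 + (s ^ 2 - 1) * w - s ^ 2 * α) := by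
    rw [him, ← mul_conj' α]
    field_simp
  rw [hscale, mul_eq_zero, or_iff_right]
  exact div_ne_zero ((map_ne_zero _).mpr hα) (pow_ne_zero 2 hs0)

/-- A non-identity Möbius self-map `a(w) = τ(w − α)/(1 − conj(α) w)` of the
unit disc (|τ| = 1, α ∈ 𝔻) is fixed-point free on 𝔻 if and only if
`|1 − τ| ≤ 2|α|`. -/
theorem fixed_point_free_iff (τ α : ℂ) (hτ : ‖τ‖ = 1) (hα : ‖α‖ < 1)
    (hnontriv : ¬(τ = 1 ∧ α = 0)) :
    (∀ w : ℂ, ‖w‖ < 1 → τ * (w - α) / (1 - (starRingEnd ℂ) α * w) ≠ w) ↔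
      ‖1 - τ‖ ≤ 2 * ‖α‖ := by
  rcases eq_or_ne α 0 with rfl | hα0
  · have hτ1 : τ ≠ 1 := fun h => hnontriv ⟨h, rfl⟩
    refine iff_of_false (fun h => h 0 (by simp) (by simp)) ?_
    rw [norm_zero, mul_zero, norm_le_zero_iff, sub_eq_zero]
    exact hτ1.symm
  obtain ⟨s, rfl⟩ := IsAlgClosed.exists_pow_nat_eq τ two_pos
  have hs : ‖s‖ = 1 := by
    rwa [norm_pow, pow_eq_one_iff_of_nonneg (norm_nonneg s) two_ne_zero] at hτ
  have hc : conj α / s ≠ 0 :=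
    div_ne_zero ((map_ne_zero _).mpr hα0) (ne_zero_of_norm_ne_zero (hs ▸ one_ne_zero))
  have hαpos : 0 < ‖α‖ := norm_pos_iff.mpr hα0
  rw [norm_one_sub_sq_of_norm_eq_one hs, mul_le_mul_iff_of_pos_left two_pos, ← not_lt,
    ← exists_norm_lt_root_iff hαpos, (mul_left_surjective₀ hc).exists]
  simp only [not_exists, not_and]
  refine forall_congr' fun w => ?_
  rw [norm_mul, norm_div, norm_conj, hs, div_one, mul_lt_iff_lt_one_right hαpos]
  refine forall_congr' fun hw => ?_
  rw [Ne, mobius_eq_self_iff hα hw, quadratic_scale_iff hs hα0]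
end

section
/- Let σ ∈ 𝕋 with σ ≠ ±1, β ∈ 𝔻 \ {0} with |1 − σ| = 2|β|, and let b(λ) = σ·(λ − β)/(1 − conj(β)·λ). Suppose t ∈ [0,1], h is holomorphic on 𝔻² with |h| ≤ 1, and G(z₁,z₂) = (t·z₁ + (1−t)·b(z₂) − z₁·b(z₂)·h(z₁,z₂)) / (1 − ((1−t)·z₁ + t·b(z₂))·h(z₁,z₂)) satisfies G(λ, b⁻¹(λ)) = λ for all λ ∈ 𝔻 and G is symmetric (G(z₁,z₂) = G(z₂,z₁)). Then t = 1/2 and h is the constant (σ − 1)/(2σβ), which has modulus 1. -/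
/-!
Since `b β = 0`, `G` vanishes at `(0, β)`, hence by symmetry at `(β, 0)`, where `b 0 = -σβ`;
this gives `σ β h(β, 0) = (1 - t) σ - t`. For `|σ| = 1` one has
`|(1 - t) σ - t|² = |1 - σ|² / 4 + (2t - 1)² (1 + Re σ) / 2`, so the tangency condition
`|1 - σ| = 2|β|` and `|h| ≤ 1` force `t = 1/2` and `|h(β, 0)| = 1`. By the maximum modulus
principle `h` is then constant on the bidisc.
-/

open Set Metric

namespace Complex

lemma neg_one_lt_re_of_norm_eq_one {σ : ℂ} (hσ : ‖σ‖ = 1) (hσ1 : σ ≠ -1) : -1 < σ.re := by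
  have hle : -1 ≤ σ.re := by linarith [neg_abs_le σ.re, abs_re_le_norm σ]
  refine hle.lt_of_ne fun hre => hσ1 ?_
  have him : σ.im = 0 := abs_re_eq_norm.mp (by rw [← hre, hσ]; norm_num)
  exact Complex.ext (by simp [← hre]) (by simp [him])

lemma norm_sub_ofReal_sq_of_norm_eq_one {σ : ℂ} (hσ : ‖σ‖ = 1) (t : ℝ) :
    ‖(1 - t) * σ - t‖ ^ 2 = ‖1 - σ‖ ^ 2 / 4 + (2 * t - 1) ^ 2 * (1 + σ.re) / 2 := by
  have hnormSq : σ.re * σ.re + σ.im * σ.im = 1 := by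
    rw [← normSq_apply, ← Complex.sq_norm, hσ, one_pow]
  simp only [Complex.sq_norm, normSq_apply, sub_re, sub_im, mul_re, mul_im, one_re, one_im,
    ofReal_re, ofReal_im]
  linear_combination (t ^ 2 - 2 * t + 3 / 4) * hnormSq

lemma eq_one_half_of_norm_sub_ofReal_le {σ : ℂ} (hσ : ‖σ‖ = 1) (hσ1 : σ ≠ -1) {t : ℝ}
    (h : ‖(1 - t) * σ - t‖ ≤ ‖1 - σ‖ / 2) : t = 1 / 2 := by
  have hsq : ‖(1 - t) * σ - t‖ ^ 2 ≤ ‖1 - σ‖ ^ 2 / 4 := by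
    nlinarith [norm_nonneg ((1 - t) * σ - t)]
  rw [norm_sub_ofReal_sq_of_norm_eq_one hσ] at hsq
  have hre := neg_one_lt_re_of_norm_eq_one hσ hσ1
  have : (2 * t - 1) ^ 2 ≤ 0 := by nlinarith
  nlinarith [sq_nonneg (2 * t - 1)]

lemma norm_ofReal_convex_comb_le_one {a b : ℂ} (ha : ‖a‖ ≤ 1) (hb : ‖b‖ ≤ 1) {t : ℝ}
    (ht : t ∈ Icc (0 : ℝ) 1) : ‖(1 - t) * a + t * b‖ ≤ 1 := by
  have := convex_closedBall (0 : ℂ) 1 (mem_closedBall_zero_iff.mpr ha)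
    (mem_closedBall_zero_iff.mpr hb) (sub_nonneg.mpr ht.2) ht.1 (sub_add_cancel 1 t)
  simpa [real_smul] using this

lemma one_sub_mul_mul_ne_zero {a b c : ℂ} (ha : ‖a‖ < 1) (hb : ‖b‖ ≤ 1) (hc : ‖c‖ ≤ 1) :
    1 - a * b * c ≠ 0 := by
  refine sub_ne_zero.mpr fun h => lt_irrefl (1 : ℝ) ?_
  calc 1 = ‖a * b * c‖ := by rw [← h, norm_one]
    _ ≤ ‖a‖ * 1 * 1 := norm_mul_le_of_le (norm_mul_le_of_le le_rfl hb) hc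
    _ < 1 := by simpa using ha

end Complex

lemma setOf_norm_fst_lt_and_norm_snd_lt_eq_ball {E F : Type*} [SeminormedAddCommGroup E]
    [SeminormedAddCommGroup F] (r : ℝ) :
    {z : E × F | ‖z.1‖ < r ∧ ‖z.2‖ < r} = ball 0 r := by
  ext z
  simp [Prod.norm_def]

section Tangency

variable {σ β : ℂ}

lemma eq_one_half_of_tangency (hσ : ‖σ‖ = 1) (hσ1 : σ ≠ -1) (htan : ‖1 - σ‖ = 2 * ‖β‖) {c : ℂ}
    (hc : ‖c‖ ≤ 1) {t : ℝ} (h : σ * β * c = (1 - t) * σ - t) : t = 1 / 2 := by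
  refine Complex.eq_one_half_of_norm_sub_ofReal_le hσ hσ1 ?_
  calc ‖(1 - t) * σ - t‖ = ‖σ * β * c‖ := by rw [h]
    _ ≤ 1 * ‖β‖ * 1 := norm_mul_le_of_le (norm_mul_le_of_le hσ.le le_rfl) hc
    _ = ‖1 - σ‖ / 2 := by rw [htan]; ring

lemma norm_sub_one_div_eq_one_of_tangency (hσ : ‖σ‖ = 1) (htan : ‖1 - σ‖ = 2 * ‖β‖)
    (hβ0 : β ≠ 0) : ‖(σ - 1) / (2 * σ * β)‖ = 1 := by
  rw [norm_div, norm_mul, norm_mul, hσ, norm_sub_rev, htan]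
  field_simp
  simp

end Tangency

theorem unique_left_inverse_symmetrized_bidisc_general (σ β : ℂ)
    (hσ : ‖σ‖ = 1) (hσ2 : σ ≠ -1)
    (hβ : ‖β‖ < 1) (hβ0 : β ≠ 0) (htan : ‖1 - σ‖ = 2 * ‖β‖)
    (t : ℝ) (ht : t ∈ Set.Icc (0 : ℝ) 1)
    (h : ℂ × ℂ → ℂ)
    (hhol : DifferentiableOn ℂ h {z : ℂ × ℂ | ‖z.1‖ < 1 ∧ ‖z.2‖ < 1})
    (hbd : ∀ z : ℂ × ℂ, ‖z.1‖ < 1 → ‖z.2‖ < 1 → ‖h z‖ ≤ 1)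
    (G : ℂ × ℂ → ℂ)
    (hG : ∀ z : ℂ × ℂ, ‖z.1‖ < 1 → ‖z.2‖ < 1 →
      G z = ((t : ℂ) * z.1 + (1 - (t : ℂ)) * (σ * (z.2 - β) / (1 - (starRingEnd ℂ) β * z.2)) -
              z.1 * (σ * (z.2 - β) / (1 - (starRingEnd ℂ) β * z.2)) * h z) /
            (1 - ((1 - (t : ℂ)) * z.1 +
              (t : ℂ) * (σ * (z.2 - β) / (1 - (starRingEnd ℂ) β * z.2))) * h z))
    (hsym : ∀ z₁ z₂ : ℂ, ‖z₁‖ < 1 → ‖z₂‖ < 1 → G (z₁, z₂) = G (z₂, z₁)) :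
    t = 1 / 2 ∧
      (∀ z : ℂ × ℂ, ‖z.1‖ < 1 → ‖z.2‖ < 1 → h z = (σ - 1) / (2 * σ * β)) ∧
      ‖(σ - 1) / (2 * σ * β)‖ = 1 := by
  have h0 : ‖(0 : ℂ)‖ < 1 := by simp
  set c := h (β, 0)
  have hc : ‖c‖ ≤ 1 := hbd (β, 0) hβ h0
  set w : ℂ := (1 - t) * 1 + t * -σ
  have hw : ‖w‖ ≤ 1 := Complex.norm_ofReal_convex_comb_le_one (by simp) (by simp [hσ]) ht
  have hGβ0 : G (β, 0) = β * (σ * β * c - ((1 - t) * σ - t)) / (1 - β * w * c) := by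
    rw [hG _ hβ h0]; congr 1 <;> simp <;> ring
  have hzero : G (β, 0) = 0 := by rw [hsym β 0 hβ h0, hG _ h0 hβ]; simp
  have key : σ * β * c = (1 - t) * σ - t := by
    rw [hGβ0, div_eq_zero_iff, mul_eq_zero, sub_eq_zero] at hzero
    exact (hzero.resolve_right (Complex.one_sub_mul_mul_ne_zero hβ hw hc)).resolve_left hβ0
  have ht' : t = 1 / 2 := eq_one_half_of_tangency hσ hσ2 htan hc key
  have hnorm := norm_sub_one_div_eq_one_of_tangency hσ htan hβ0
  have hc_val : c = (σ - 1) / (2 * σ * β) := by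
    have hσ0 : σ ≠ 0 := by rintro rfl; simp at hσ
    rw [ht'] at key
    push_cast at key
    field_simp
    linear_combination 2 * key
  have hmax : IsMaxOn (norm ∘ h) (ball 0 1) (β, 0) := fun z hz => by
    rw [← setOf_norm_fst_lt_and_norm_snd_lt_eq_ball] at hz
    change ‖h z‖ ≤ ‖c‖
    rw [hc_val, hnorm]
    exact hbd z hz.1 hz.2
  rw [setOf_norm_fst_lt_and_norm_snd_lt_eq_ball] at hhol
  refine ⟨ht', fun z hz1 hz2 => ?_, hnorm⟩
  rw [← hc_val]
  exact Complex.eq_const_of_exists_max hhol (by simp [Prod.norm_def, hβ]) hmax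
    (by simp [Prod.norm_def, hz1, hz2])

/-- Uniqueness step for left inverses in the symmetrized bidisc (boundary
tangency case). Let `b(w) = σ(w − β)/(1 − conj(β) w)` be a fixed-point free
automorphism of 𝔻 whose fixed-point equation has a double root on the circle
(`|1 − σ| = 2|β|`, σ ∈ 𝕋 \ {±1}, β ∈ 𝔻 \ {0}). If `t ∈ [0,1]`, `h` is
holomorphic on 𝔻² with `|h| ≤ 1`, and the function
`G(z₁,z₂) = (t z₁ + (1−t) b(z₂) − z₁ b(z₂) h(z₁,z₂)) / (1 − ((1−t) z₁ + t b(z₂)) h(z₁,z₂))`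
is symmetric and satisfies `G(w, b⁻¹(w)) = w` on 𝔻, then `t = 1/2` and `h` is
the unimodular constant `(σ − 1)/(2σβ)`. -/
theorem unique_left_inverse_symmetrized_bidisc (σ β : ℂ)
    (hσ : ‖σ‖ = 1) (hσ1 : σ ≠ 1) (hσ2 : σ ≠ -1)
    (hβ : ‖β‖ < 1) (hβ0 : β ≠ 0) (htan : ‖1 - σ‖ = 2 * ‖β‖)
    (t : ℝ) (ht : t ∈ Set.Icc (0 : ℝ) 1)
    (h : ℂ × ℂ → ℂ)
    (hhol : DifferentiableOn ℂ h {z : ℂ × ℂ | ‖z.1‖ < 1 ∧ ‖z.2‖ < 1})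
    (hbd : ∀ z : ℂ × ℂ, ‖z.1‖ < 1 → ‖z.2‖ < 1 → ‖h z‖ ≤ 1)
    (G : ℂ × ℂ → ℂ)
    (hG : ∀ z : ℂ × ℂ, ‖z.1‖ < 1 → ‖z.2‖ < 1 →
      G z = ((t : ℂ) * z.1 + (1 - (t : ℂ)) * (σ * (z.2 - β) / (1 - (starRingEnd ℂ) β * z.2)) -
              z.1 * (σ * (z.2 - β) / (1 - (starRingEnd ℂ) β * z.2)) * h z) /
            (1 - ((1 - (t : ℂ)) * z.1 +
              (t : ℂ) * (σ * (z.2 - β) / (1 - (starRingEnd ℂ) β * z.2))) * h z))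
    (hsym : ∀ z₁ z₂ : ℂ, ‖z₁‖ < 1 → ‖z₂‖ < 1 → G (z₁, z₂) = G (z₂, z₁))
    (hleft : ∀ w : ℂ, ‖w‖ < 1 →
      G (w, (w + σ * β) / (σ + (starRingEnd ℂ) β * w)) = w) :
    t = 1 / 2 ∧
      (∀ z : ℂ × ℂ, ‖z.1‖ < 1 → ‖z.2‖ < 1 → h z = (σ - 1) / (2 * σ * β)) ∧
      ‖(σ - 1) / (2 * σ * β)‖ = 1 :=
  unique_left_inverse_symmetrized_bidisc_general σ β hσ hσ2 hβ hβ0 htan t ht h hhol hbd G hG hsym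
end

section
/- Let σ ∈ 𝕋, β ∈ 𝔻 \ {0}, t ∈ [0,1], and suppose h : 𝔻² → closure(𝔻) is holomorphic and satisfies t − (1 − t)·σ + σ·β·h(β, 0) = 0 where |1 − σ| = 2|β|. Then |h(β,0)| = |t − (1−t)σ|/|β| ≥ |1 − σ|/(2|β|) = 1, with equality forcing t = 1/2; hence by the maximum principle h is a unimodular constant. -/
/-!
For unimodular `σ`, the vectors `1 - σ` and `1 + σ` are orthogonal, and
`t - (1 - t) σ = (1 - σ) / 2 + (t - 1/2) (1 + σ)`; hence
`‖t - (1 - t) σ‖ ≥ ‖1 - σ‖ / 2 = ‖β‖`, with equality only at `t = 1/2` (as `σ ≠ -1`).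
The equation gives `‖β‖ ‖h (β, 0)‖ = ‖t - (1 - t) σ‖`, so `‖h (β, 0)‖ ≥ 1`; together with
`‖h‖ ≤ 1` this forces equality throughout, and the maximum modulus principle on the
(connected) bidisc makes `h` constant.
-/

open Metric

namespace Complex

variable {σ : ℂ}

theorem norm_sq_ofReal_sub_one_sub_mul (hσ : ‖σ‖ = 1) (t : ℝ) :
    ‖(t : ℂ) - (1 - t) * σ‖ ^ 2 = ‖1 - σ‖ ^ 2 / 4 + (t - 1 / 2) ^ 2 * ‖1 + σ‖ ^ 2 := by
  have hσ' : σ.re * σ.re + σ.im * σ.im = 1 := by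
    rw [← normSq_apply, normSq_eq_norm_sq, hσ, one_pow]
  simp only [Complex.sq_norm, normSq_apply, sub_re, sub_im, add_re, add_im, mul_re, mul_im, one_re,
    one_im, ofReal_re, ofReal_im]
  linear_combination (1 / 2 - t) * hσ'

theorem norm_one_sub_div_two_le (hσ : ‖σ‖ = 1) (t : ℝ) :
    ‖1 - σ‖ / 2 ≤ ‖(t : ℂ) - (1 - t) * σ‖ := by
  refine le_of_pow_le_pow_left₀ two_ne_zero (norm_nonneg _) ?_
  rw [norm_sq_ofReal_sub_one_sub_mul hσ]
  linarith [mul_nonneg (sq_nonneg (t - 1 / 2)) (sq_nonneg ‖1 + σ‖)]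

theorem eq_one_half_of_norm_eq (hσ : ‖σ‖ = 1) (hσ₁ : σ ≠ -1) {t : ℝ}
    (h : ‖(t : ℂ) - (1 - t) * σ‖ = ‖1 - σ‖ / 2) : t = 1 / 2 := by
  have hσ₁' : 0 < ‖1 + σ‖ ^ 2 := by
    have : 1 + σ ≠ 0 := fun h₀ => hσ₁ (by linear_combination h₀)
    positivity
  have hsq : (t - 1 / 2) ^ 2 * ‖1 + σ‖ ^ 2 = 0 := by
    linear_combination congrArg (· ^ 2) h - norm_sq_ofReal_sub_one_sub_mul hσ t
  have := (mul_eq_zero.1 hsq).resolve_right hσ₁'.ne'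
  linarith [pow_eq_zero_iff (n := 2) two_ne_zero |>.1 this]

end Complex

theorem h_is_unimodular_constant_general (σ β : ℂ)
    (hσ : ‖σ‖ = 1) (hβ : ‖β‖ < 1) (hβ0 : β ≠ 0)
    (htan : ‖1 - σ‖ = 2 * ‖β‖)
    (t : ℝ)
    (h : ℂ × ℂ → ℂ)
    (hhol : DifferentiableOn ℂ h {z : ℂ × ℂ | ‖z.1‖ < 1 ∧ ‖z.2‖ < 1})
    (hbd : ∀ z : ℂ × ℂ, ‖z.1‖ < 1 → ‖z.2‖ < 1 → ‖h z‖ ≤ 1)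
    (heq : (t : ℂ) - (1 - (t : ℂ)) * σ + σ * β * h (β, 0) = 0) :
    ‖h (β, 0)‖ = 1 ∧ t = 1 / 2 ∧
      ∃ c : ℂ, ‖c‖ = 1 ∧ ∀ z : ℂ × ℂ, ‖z.1‖ < 1 → ‖z.2‖ < 1 → h z = c := by
  set w := h (β, 0)
  have hw : ‖(t : ℂ) - (1 - t) * σ‖ = ‖β‖ * ‖w‖ := by
    rw [eq_neg_of_add_eq_zero_left heq, norm_neg, norm_mul, norm_mul, hσ, one_mul]
  have hσ₁ : σ ≠ -1 := by
    rintro rfl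
    norm_num at htan
    linarith
  have hw_le : ‖w‖ ≤ 1 := hbd (β, 0) hβ (by simp)
  have hlower := Complex.norm_one_sub_div_two_le hσ t
  rw [hw, htan, mul_div_cancel_left₀ _ two_ne_zero] at hlower
  have hw1 : ‖w‖ = 1 :=
    le_antisymm hw_le (le_of_mul_le_mul_left (by simpa using hlower) (norm_pos_iff.2 hβ0))
  have ht : t = 1 / 2 :=
    Complex.eq_one_half_of_norm_eq hσ hσ₁ (by rw [hw, hw1, htan]; ring)
  refine ⟨hw1, ht, w, hw1, fun z hz₁ hz₂ => ?_⟩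
  have hU : {z : ℂ × ℂ | ‖z.1‖ < 1 ∧ ‖z.2‖ < 1} = ball 0 1 := by
    ext z
    simp [Prod.norm_def]
  have hmax : IsMaxOn (‖h ·‖) (ball 0 1) (β, 0) := fun z hz => by
    rw [← hU] at hz
    exact (hbd z hz.1 hz.2).trans hw1.ge
  exact Complex.eqOn_of_isPreconnected_of_isMaxOn_norm (convex_ball _ _).isPreconnected
    isOpen_ball (hU ▸ hhol) (hU ▸ ⟨hβ, by simp⟩) hmax (hU ▸ ⟨hz₁, hz₂⟩)

/-- Let σ ∈ 𝕋, β ∈ 𝔻 \ {0} with `|1 − σ| = 2|β|`, `t ∈ [0,1]`, and let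
`h : 𝔻² → closure(𝔻)` be holomorphic with `t − (1 − t)σ + σ β h(β,0) = 0`.
Then `|h(β,0)| = 1`, `t = 1/2`, and by the maximum principle `h` is a
unimodular constant on 𝔻². -/
theorem h_is_unimodular_constant (σ β : ℂ)
    (hσ : ‖σ‖ = 1) (hβ : ‖β‖ < 1) (hβ0 : β ≠ 0)
    (htan : ‖1 - σ‖ = 2 * ‖β‖)
    (t : ℝ) (ht : t ∈ Set.Icc (0 : ℝ) 1)
    (h : ℂ × ℂ → ℂ)
    (hhol : DifferentiableOn ℂ h {z : ℂ × ℂ | ‖z.1‖ < 1 ∧ ‖z.2‖ < 1})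
    (hbd : ∀ z : ℂ × ℂ, ‖z.1‖ < 1 → ‖z.2‖ < 1 → ‖h z‖ ≤ 1)
    (heq : (t : ℂ) - (1 - (t : ℂ)) * σ + σ * β * h (β, 0) = 0) :
    ‖h (β, 0)‖ = 1 ∧ t = 1 / 2 ∧
      ∃ c : ℂ, ‖c‖ = 1 ∧ ∀ z : ℂ × ℂ, ‖z.1‖ < 1 → ‖z.2‖ < 1 → h z = c :=
  h_is_unimodular_constant_general σ β hσ hβ hβ0 htan t h hhol hbd heq
end

section
/- For every z ∈ 𝔼 (the tetrablock) and every ω with |ω| = 1, the equation Φ_ω(z₁, λz₂, λz₃) = λ, where Φ_ω(x) = (ω x₃ − x₁)/(ω x₂ − 1), has exactly one solution λ in the open unit disc 𝔻. -/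
/-- The tetrablock 𝔼 ⊂ ℂ³. -/
def Tetrablock : Set (ℂ × ℂ × ℂ) :=
  {x | ‖x.1 - (starRingEnd ℂ) x.2.1 * x.2.2‖ +
       ‖x.2.1 - (starRingEnd ℂ) x.1 * x.2.2‖ + ‖x.2.2‖ ^ 2 < 1}

/-!
The function `g(a, b, c) = |a - b̄c| + |b - āc| + |c|²` defining `𝔼` is symmetric in `a, b` and
invariant under `(b, c) ↦ (ωb, ωc)` for `|ω| = 1`, so we may take `ω = 1`. Off the denominator's
zero set the equation then reads `b λ² - (1 + c) λ + a = 0`; for `b ≠ 0` write it as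
`b (λ - x)(λ - y)`, i.e. `a = bxy`, `c = b(x + y) - 1`.

If `|x| < 1` and `|y| ≤ 1`, then `|a| < |b|`, and with `A = |a - b̄c|`, `B = |b - āc|` one has
`B² - A² = (|b|² - |a|²)(1 - |c|²)` and `B - A ≤ |b|² - |a|²`; together these force `g ≥ 1`.
Letting `x` tend to the boundary, `g ≥ 1` whenever both roots lie in the closed disc. If both roots
lie outside the open disc, `1/x, 1/y` are the roots of the quadratic with `a` and `b` exchanged,
so again `g ≥ 1`. Hence on `𝔼` exactly one root lies in the open disc.
-/

open ComplexConjugate Topology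

noncomputable def tetrablockGauge (a b c : ℂ) : ℝ :=
  ‖a - conj b * c‖ + ‖b - conj a * c‖ + ‖c‖ ^ 2

theorem tetrablockGauge_comm (a b c : ℂ) : tetrablockGauge a b c = tetrablockGauge b a c := by
  unfold tetrablockGauge; ring

theorem tetrablockGauge_mul_left {ω : ℂ} (hω : ‖ω‖ = 1) (a b c : ℂ) :
    tetrablockGauge a (ω * b) (ω * c) = tetrablockGauge a b c := by
  have hωω : conj ω * ω = 1 := by rw [Complex.conj_mul', hω]; norm_num
  have hA : a - conj (ω * b) * (ω * c) = a - conj b * c := by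
    rw [map_mul]; linear_combination (-(conj b * c)) * hωω
  have hB : ω * b - conj a * (ω * c) = ω * (b - conj a * c) := by ring
  simp only [tetrablockGauge, hA, hB, norm_mul, hω, one_mul]

theorem norm_lt_one_of_tetrablockGauge_lt_one {a b c : ℂ} (h : tetrablockGauge a b c < 1) :
    ‖b‖ < 1 := by
  unfold tetrablockGauge at h
  have hc : ‖c‖ < 1 := by
    nlinarith [norm_nonneg c, norm_nonneg (a - conj b * c), norm_nonneg (b - conj a * c)]
  have hb : ‖b‖ ≤ ‖b - conj a * c‖ + ‖a‖ * ‖c‖ := by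
    simpa [norm_mul] using norm_le_norm_sub_add b (conj a * c)
  have ha : ‖a‖ ≤ ‖a - conj b * c‖ + ‖b‖ * ‖c‖ := by
    simpa [norm_mul] using norm_le_norm_sub_add a (conj b * c)
  have key : ‖b‖ * (1 - ‖c‖ ^ 2) < 1 * (1 - ‖c‖ ^ 2) := by
    nlinarith [mul_le_mul_of_nonneg_right ha (norm_nonneg c),
      mul_le_mul_of_nonneg_left hc.le (norm_nonneg (a - conj b * c))]
  exact lt_of_mul_lt_mul_right key (by nlinarith [norm_nonneg c])

theorem sq_norm_sub_sq_norm_eq (a b c : ℂ) :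
    ‖b - conj a * c‖ ^ 2 - ‖a - conj b * c‖ ^ 2 = (‖b‖ ^ 2 - ‖a‖ ^ 2) * (1 - ‖c‖ ^ 2) := by
  have hre : (b * conj (conj a * c)).re = (a * conj (conj b * c)).re := by
    simp only [map_mul, Complex.conj_conj]; ring_nf
  simp only [Complex.sq_norm, Complex.normSq_sub, hre, Complex.normSq_mul, Complex.normSq_conj]
  ring

theorem norm_sub_sub_norm_sub_le (b x y : ℂ) (hx : ‖x‖ ≤ 1) (hy : ‖y‖ ≤ 1) :
    ‖b - conj (b * (x * y)) * (b * (x + y) - 1)‖ - ‖b * (x * y) - conj b * (b * (x + y) - 1)‖ ≤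
      ‖b‖ ^ 2 - ‖b * (x * y)‖ ^ 2 := by
  have hX : conj (b - conj (b * (x * y)) * (b * (x + y) - 1)) -
        (b * (x * y) - conj b * (b * (x + y) - 1)) =
      ((‖b‖ ^ 2 * (1 - ‖y‖ ^ 2) : ℝ) : ℂ) * x + ((‖b‖ ^ 2 * (1 - ‖x‖ ^ 2) : ℝ) : ℂ) * y := by
    simp only [map_sub, map_mul, map_add, map_one, Complex.conj_conj]
    push_cast
    linear_combination (x + y - y * x * conj x - x * y * conj y) * Complex.mul_conj' b
      - y * (‖b‖ : ℂ) ^ 2 * Complex.mul_conj' x - x * (‖b‖ : ℂ) ^ 2 * Complex.mul_conj' y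
  have hx2 : 0 ≤ 1 - ‖x‖ ^ 2 := by nlinarith [norm_nonneg x]
  have hy2 : 0 ≤ 1 - ‖y‖ ^ 2 := by nlinarith [norm_nonneg y]
  calc _ = ‖conj (b - conj (b * (x * y)) * (b * (x + y) - 1))‖ -
        ‖b * (x * y) - conj b * (b * (x + y) - 1)‖ := by rw [Complex.norm_conj]
    _ ≤ ‖((‖b‖ ^ 2 * (1 - ‖y‖ ^ 2) : ℝ) : ℂ) * x + ((‖b‖ ^ 2 * (1 - ‖x‖ ^ 2) : ℝ) : ℂ) * y‖ := by
      rw [← hX]; exact norm_sub_norm_le _ _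
    _ ≤ ‖b‖ ^ 2 * (1 - ‖y‖ ^ 2) * ‖x‖ + ‖b‖ ^ 2 * (1 - ‖x‖ ^ 2) * ‖y‖ := by
      refine (norm_add_le _ _).trans_eq ?_
      rw [norm_mul, norm_mul, Complex.norm_real, Complex.norm_real,
        Real.norm_of_nonneg (mul_nonneg (sq_nonneg _) hy2),
        Real.norm_of_nonneg (mul_nonneg (sq_nonneg _) hx2)]
    _ ≤ ‖b‖ ^ 2 - ‖b * (x * y)‖ ^ 2 := by
      -- `1 - s²t² - s(1 - t²) - t(1 - s²) = (1 - s)(1 - t)(1 - st)`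
      rw [norm_mul, norm_mul]
      nlinarith [mul_nonneg (sq_nonneg ‖b‖) (mul_nonneg (mul_nonneg (sub_nonneg.2 hx)
        (sub_nonneg.2 hy)) (sub_nonneg.2 (mul_le_one₀ hx (norm_nonneg y) hy)))]

theorem one_le_tetrablockGauge_of_norm_lt_one {b x y : ℂ} (hb : b ≠ 0) (hx : ‖x‖ < 1)
    (hy : ‖y‖ ≤ 1) : 1 ≤ tetrablockGauge (b * (x * y)) b (b * (x + y) - 1) := by
  set a := b * (x * y)
  set c := b * (x + y) - 1
  have hab : ‖a‖ < ‖b‖ := by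
    have hxy : ‖x‖ * ‖y‖ < 1 := by nlinarith [norm_nonneg x, norm_nonneg y]
    simpa [a, norm_mul] using mul_lt_mul_of_pos_left hxy (norm_pos_iff.2 hb)
  have hBA := norm_sub_sub_norm_sub_le b x y hx.le hy
  have hsq := sq_norm_sub_sq_norm_eq a b c
  unfold tetrablockGauge
  by_contra! h
  have hD : 0 < ‖b‖ ^ 2 - ‖a‖ ^ 2 := by nlinarith [norm_nonneg a]
  have hAB : 0 ≤ ‖b - conj a * c‖ + ‖a - conj b * c‖ := by positivity
  nlinarith [mul_le_mul_of_nonneg_right hBA hAB, mul_lt_mul_of_pos_left h hD]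

theorem one_le_tetrablockGauge_of_norm_le_one {b x y : ℂ} (hb : b ≠ 0) (hx : ‖x‖ ≤ 1)
    (hy : ‖y‖ ≤ 1) : 1 ≤ tetrablockGauge (b * (x * y)) b (b * (x + y) - 1) := by
  set g : ℝ → ℝ := fun t => tetrablockGauge (b * (t * x * y)) b (b * (t * x + y) - 1)
  have hg : Continuous g := by unfold g tetrablockGauge; fun_prop
  have hlim : Filter.Tendsto g (𝓝[<] 1) (𝓝 (g 1)) := (hg.tendsto 1).mono_left nhdsWithin_le_nhds
  simp only [g, Complex.ofReal_one, one_mul] at hlim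
  refine ge_of_tendsto hlim ?_
  filter_upwards [Ioo_mem_nhdsLT zero_lt_one] with t ht
  refine one_le_tetrablockGauge_of_norm_lt_one hb ?_ hy
  rw [norm_mul, Complex.norm_real, Real.norm_of_nonneg ht.1.le]
  nlinarith [mul_le_mul_of_nonneg_left hx ht.1.le, ht.2]

theorem one_le_tetrablockGauge_of_one_le_norm {b x y : ℂ} (hb : b ≠ 0) (hx : 1 ≤ ‖x‖)
    (hy : 1 ≤ ‖y‖) : 1 ≤ tetrablockGauge (b * (x * y)) b (b * (x + y) - 1) := by
  have hx0 : x ≠ 0 := norm_pos_iff.1 (by linarith)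
  have hy0 : y ≠ 0 := norm_pos_iff.1 (by linarith)
  have hinv := one_le_tetrablockGauge_of_norm_le_one (x := x⁻¹) (y := y⁻¹)
    (mul_ne_zero hb (mul_ne_zero hx0 hy0))
    (by rw [norm_inv]; exact inv_le_one_of_one_le₀ hx)
    (by rw [norm_inv]; exact inv_le_one_of_one_le₀ hy)
  have hP : b * (x * y) * (x⁻¹ * y⁻¹) = b := by field_simp
  have hS : b * (x * y) * (x⁻¹ + y⁻¹) = b * (x + y) := by field_simp; ring
  rwa [hP, hS, tetrablockGauge_comm] at hinv

theorem exists_mul_add_eq_and_mul_mul_eq {K : Type*} [Field K] [IsAlgClosed K] {p : K}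
    (hp : p ≠ 0) (s q : K) : ∃ x y : K, p * (x + y) = s ∧ p * (x * y) = q := by
  open Polynomial in
  obtain ⟨x, hx⟩ := IsAlgClosed.exists_root (C p * X ^ 2 + C (-s) * X + C q)
    (by rw [degree_quadratic hp]; decide)
  refine ⟨x, s / p - x, by field_simp; ring, ?_⟩
  simp only [IsRoot, eval_add, eval_mul, eval_C, eval_pow, eval_X] at hx
  field_simp
  linear_combination -hx

theorem existsUnique_one_add_mul_eq_of_tetrablockGauge_lt_one {a c : ℂ}
    (h : tetrablockGauge a 0 c < 1) : ∃! w : ℂ, ‖w‖ < 1 ∧ (1 + c) * w = a := by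
  simp only [tetrablockGauge, map_zero, zero_mul, sub_zero, zero_sub, norm_neg, norm_mul,
    Complex.norm_conj] at h
  have hc : ‖c‖ < 1 := by nlinarith [norm_nonneg a, norm_nonneg c]
  have hac : ‖a‖ < ‖1 + c‖ := by
    have := norm_sub_norm_le (1 : ℂ) (-c)
    rw [sub_neg_eq_add, norm_neg, norm_one] at this
    nlinarith [norm_nonneg a, norm_nonneg c]
  have hc0 : 1 + c ≠ 0 := norm_pos_iff.1 ((norm_nonneg a).trans_lt hac)
  refine ⟨a / (1 + c), ⟨?_, mul_div_cancel₀ a hc0⟩, fun w ⟨_, hw⟩ => ?_⟩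
  · rw [norm_div]; exact (div_lt_one ((norm_nonneg a).trans_lt hac)).2 hac
  · rw [eq_div_iff hc0, mul_comm, hw]

theorem existsUnique_of_norm_lt_one_lt_norm {x y : ℂ} (hx : ‖x‖ < 1) (hy : 1 < ‖y‖) :
    ∃! w : ℂ, ‖w‖ < 1 ∧ (w - x) * (w - y) = 0 := by
  refine ⟨x, ⟨hx, by ring⟩, fun w ⟨hw, hroot⟩ => ?_⟩
  rcases mul_eq_zero.1 hroot with h | h
  · exact sub_eq_zero.1 h
  · rw [sub_eq_zero.1 h] at hw; linarith

theorem existsUnique_root_of_tetrablockGauge_lt_one {b x y : ℂ} (hb : b ≠ 0)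
    (h : tetrablockGauge (b * (x * y)) b (b * (x + y) - 1) < 1) :
    ∃! w : ℂ, ‖w‖ < 1 ∧ (w - x) * (w - y) = 0 := by
  have hin : ‖x‖ < 1 ∨ ‖y‖ < 1 := by
    by_contra! hout; exact h.not_ge (one_le_tetrablockGauge_of_one_le_norm hb hout.1 hout.2)
  have hout : 1 < ‖x‖ ∨ 1 < ‖y‖ := by
    by_contra! hin; exact h.not_ge (one_le_tetrablockGauge_of_norm_le_one hb hin.1 hin.2)
  rcases hin with hx | hy
  · exact existsUnique_of_norm_lt_one_lt_norm hx (hout.resolve_left hx.not_gt)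
  · simpa only [mul_comm (_ - x)] using
      existsUnique_of_norm_lt_one_lt_norm hy (hout.resolve_right hy.not_gt)

theorem existsUnique_fixedPoint_of_tetrablockGauge_lt_one {a b c : ℂ}
    (h : tetrablockGauge a b c < 1) :
    ∃! w : ℂ, ‖w‖ < 1 ∧ (w * c - a) / (w * b - 1) = w := by
  have hden : ∀ w : ℂ, ‖w‖ < 1 → w * b - 1 ≠ 0 := fun w hw hw1 => by
    have : ‖w * b‖ = 1 := by rw [sub_eq_zero.1 hw1, norm_one]
    rw [norm_mul] at this
    nlinarith [norm_nonneg w, norm_nonneg b, norm_lt_one_of_tetrablockGauge_lt_one h]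
  have hquad : ∀ w : ℂ, ‖w‖ < 1 →
      ((w * c - a) / (w * b - 1) = w ↔ (1 + c) * w = b * w ^ 2 + a) := fun w hw => by
    rw [div_eq_iff (hden w hw)]
    constructor <;> intro h <;> linear_combination h
  rw [existsUnique_congr fun w => and_congr_right (hquad w)]
  rcases eq_or_ne b 0 with rfl | hb
  · simpa only [zero_mul, zero_add] using existsUnique_one_add_mul_eq_of_tetrablockGauge_lt_one h
  · obtain ⟨x, y, hS, hP⟩ := exists_mul_add_eq_and_mul_mul_eq hb (1 + c) a
    obtain rfl : c = b * (x + y) - 1 := by linear_combination -hS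
    subst hP
    have hfac : ∀ w, (1 + (b * (x + y) - 1)) * w = b * w ^ 2 + b * (x * y) ↔
        b * ((w - x) * (w - y)) = 0 := fun w => by
      constructor <;> intro h <;> linear_combination -h
    simpa only [hfac, mul_eq_zero, hb, false_or] using
      existsUnique_root_of_tetrablockGauge_lt_one hb h

/-- For every `z ∈ 𝔼` and every unimodular ω, the equation
`Φ_ω(z₁, w z₂, w z₃) = w`, where `Φ_ω(x) = (ω x₃ − x₁)/(ω x₂ − 1)`, has exactly
one solution `w` in the open unit disc. -/
theorem tetrablock_unique_solution (z : ℂ × ℂ × ℂ) (hz : z ∈ Tetrablock)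
    (ω : ℂ) (hω : ‖ω‖ = 1) :
    ∃! w : ℂ, ‖w‖ < 1 ∧
      (ω * (w * z.2.2) - z.1) / (ω * (w * z.2.1) - 1) = w := by
  obtain ⟨a, b, c⟩ := z
  have h : tetrablockGauge a (ω * b) (ω * c) < 1 := by
    rw [tetrablockGauge_mul_left hω]; exact hz
  simpa only [mul_left_comm _ ω] using existsUnique_fixedPoint_of_tetrablockGauge_lt_one h
end

section
/- For every ω in the closed unit disc, the map 𝔼 ∋ x ↦ (x₁ + ω·x₂, ω·x₃) ∈ ℂ² maps the tetrablock 𝔼 into the symmetrized bidisc 𝔾₂. -/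
/-- The symmetrized bidisc 𝔾₂ ⊂ ℂ². -/
def SymmetrizedBidisc : Set (ℂ × ℂ) :=
  {p | ∃ w₁ w₂ : ℂ, ‖w₁‖ < 1 ∧ ‖w₂‖ < 1 ∧ p = (w₁ + w₂, w₁ * w₂)}

/-!
The symmetrized bidisc contains every `(s, p)` with `‖s - s̄ p‖ + ‖p‖² < 1`: writing
`s = w₁ + w₂`, `p = w₁ w₂`, one has `s - s̄ p = (1 - ‖w₂‖²) w₁ + (1 - ‖w₁‖²) w₂`, and a root
outside the disc would force the left side to be at least `1`.

For `x` in the tetrablock, `s = x₁ + ω x₂`, `p = ω x₃` and `u = ‖ω‖`,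
`s - s̄ p = (1 - u²) x₁ + u² (x₁ - x̄₂ x₃) + ω (x₂ - x̄₁ x₃)`, so `‖s - s̄ p‖ + ‖p‖²` is at most
`(1 - u²) ‖x₁‖ + u² (‖x₁ - x̄₂ x₃‖ + ‖x₃‖²) + u ‖x₂ - x̄₁ x₃‖`. This is `< 1` because the tetrablock
satisfies `2 ‖x₁‖ + ‖x₂ - x̄₁ x₃‖ < 2`, which follows from
`(1 - ‖x₃‖²) x₁ = (x₁ - x̄₂ x₃) + x₃ · conj (x₂ - x̄₁ x₃)`.
-/

open Complex Polynomial
open scoped ComplexConjugate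

theorem exists_add_eq_mul_eq {K : Type*} [Field K] [IsAlgClosed K] (s p : K) :
    ∃ w₁ w₂ : K, w₁ + w₂ = s ∧ w₁ * w₂ = p := by
  obtain ⟨w, hw⟩ := IsAlgClosed.exists_root (C 1 * X ^ 2 + C (-s) * X + C p)
    (by rw [degree_quadratic one_ne_zero]; decide)
  refine ⟨w, s - w, by ring, ?_⟩
  simp only [IsRoot, eval_add, eval_mul, eval_C, eval_pow, eval_X] at hw
  linear_combination -hw

theorem add_sub_conj_add_mul_mul_eq (w₁ w₂ : ℂ) :
    w₁ + w₂ - conj (w₁ + w₂) * (w₁ * w₂) =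
      ((1 - ‖w₂‖ ^ 2 : ℝ) : ℂ) * w₁ + ((1 - ‖w₁‖ ^ 2 : ℝ) : ℂ) * w₂ := by
  push_cast
  rw [map_add]
  linear_combination (-w₂) * conj_mul' w₁ + (-w₁) * conj_mul' w₂

/-- If `‖w₁‖ ≥ 1 > ‖w₂‖`, the two coefficients in `add_sub_conj_add_mul_mul_eq` have opposite
signs, and the reverse triangle inequality bounds the norm below by `(‖w₁‖ + ‖w₂‖)(1 - ‖w₁ w₂‖)`,
which is at least `1 - ‖w₁ w₂‖²`. -/
theorem norm_lt_one_of_norm_add_sub_conj_add_mul_mul_add_sq_lt (w₁ w₂ : ℂ)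
    (h : ‖w₁ + w₂ - conj (w₁ + w₂) * (w₁ * w₂)‖ + ‖w₁ * w₂‖ ^ 2 < 1) : ‖w₁‖ < 1 := by
  rw [norm_mul] at h
  by_contra! hr
  set r := ‖w₁‖
  set q := ‖w₂‖
  have hq : 0 ≤ q := norm_nonneg _
  have hrq : r * q < 1 := by nlinarith [norm_nonneg (w₁ + w₂ - conj (w₁ + w₂) * (w₁ * w₂))]
  have hq1 : q < 1 := by nlinarith
  have hlow : (r + q) * (1 - r * q) ≤ ‖w₁ + w₂ - conj (w₁ + w₂) * (w₁ * w₂)‖ := by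
    rw [add_sub_conj_add_mul_mul_eq]
    refine le_trans (le_of_eq ?_) (norm_sub_le_norm_add _ _)
    rw [norm_mul, norm_mul, norm_real, norm_real, Real.norm_of_nonneg (by nlinarith),
      Real.norm_of_nonpos (by nlinarith)]
    ring
  nlinarith [mul_nonneg (sub_nonneg.2 hr) (sub_nonneg.2 hq1.le)]

theorem SymmetrizedBidisc.mem_of_norm_sub_conj_mul_add_sq_lt {s p : ℂ}
    (h : ‖s - conj s * p‖ + ‖p‖ ^ 2 < 1) : (s, p) ∈ SymmetrizedBidisc := by
  obtain ⟨w₁, w₂, rfl, rfl⟩ := exists_add_eq_mul_eq s p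
  refine ⟨w₁, w₂, norm_lt_one_of_norm_add_sub_conj_add_mul_mul_add_sq_lt w₁ w₂ h, ?_, rfl⟩
  rw [add_comm w₁, mul_comm w₁] at h
  exact norm_lt_one_of_norm_add_sub_conj_add_mul_mul_add_sq_lt w₂ w₁ h

theorem norm_mul_one_sub_norm_sq_le (x₁ x₂ x₃ : ℂ) :
    ‖x₁‖ * (1 - ‖x₃‖ ^ 2) ≤ ‖x₁ - conj x₂ * x₃‖ + ‖x₃‖ * ‖x₂ - conj x₁ * x₃‖ := by
  have key : ((1 - ‖x₃‖ ^ 2 : ℝ) : ℂ) * x₁ =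
      (x₁ - conj x₂ * x₃) + x₃ * conj (x₂ - conj x₁ * x₃) := by
    simp only [map_sub, map_mul, conj_conj]
    push_cast
    linear_combination x₁ * mul_conj' x₃
  calc ‖x₁‖ * (1 - ‖x₃‖ ^ 2) ≤ ‖((1 - ‖x₃‖ ^ 2 : ℝ) : ℂ) * x₁‖ := by
        rw [norm_mul, norm_real, mul_comm]
        exact mul_le_mul_of_nonneg_right (Real.le_norm_self _) (norm_nonneg _)
    _ ≤ _ := by
        rw [key, ← RCLike.norm_conj (x₂ - _), ← norm_mul]
        exact norm_add_le _ _

theorem Tetrablock.two_mul_norm_fst_add_norm_lt_two {x : ℂ × ℂ × ℂ} (hx : x ∈ Tetrablock) :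
    2 * ‖x.1‖ + ‖x.2.1 - conj x.1 * x.2.2‖ < 2 := by
  obtain ⟨x₁, x₂, x₃⟩ := x
  have hle := norm_mul_one_sub_norm_sq_le x₁ x₂ x₃
  set r := ‖x₁‖
  set a := ‖x₁ - conj x₂ * x₃‖
  set b := ‖x₂ - conj x₁ * x₃‖
  set c := ‖x₃‖
  change a + b + c ^ 2 < 1 at hx
  have ha : 0 ≤ a := norm_nonneg _
  have hc1 : c < 1 := by nlinarith [norm_nonneg x₃, norm_nonneg (x₂ - conj x₁ * x₃)]
  -- `r (1 - c²) ≤ a + c b < (1 - c²) - (1 - c) b`; divide by `1 - c`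
  have hb : b < (1 + c) * (1 - r) := by
    have : (1 - c) * b < (1 - c) * ((1 + c) * (1 - r)) := by nlinarith
    exact lt_of_mul_lt_mul_left this (by linarith)
  nlinarith [norm_nonneg x₃, norm_nonneg (x₂ - conj x₁ * x₃)]

theorem sub_conj_mul_eq (ω x₁ x₂ x₃ : ℂ) :
    x₁ + ω * x₂ - conj (x₁ + ω * x₂) * (ω * x₃) =
      ((1 - ‖ω‖ ^ 2 : ℝ) : ℂ) * x₁ + ((‖ω‖ ^ 2 : ℝ) : ℂ) * (x₁ - conj x₂ * x₃) +
        ω * (x₂ - conj x₁ * x₃) := by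
  rw [map_add, map_mul]
  push_cast
  linear_combination (-(conj x₂ * x₃)) * conj_mul' ω

theorem Tetrablock.norm_sub_conj_mul_add_sq_lt_one {ω : ℂ} (hω : ‖ω‖ ≤ 1) {x : ℂ × ℂ × ℂ}
    (hx : x ∈ Tetrablock) :
    ‖x.1 + ω * x.2.1 - conj (x.1 + ω * x.2.1) * (ω * x.2.2)‖ + ‖ω * x.2.2‖ ^ 2 < 1 := by
  have h2 := Tetrablock.two_mul_norm_fst_add_norm_lt_two hx
  obtain ⟨x₁, x₂, x₃⟩ := x
  dsimp only at h2 ⊢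
  set u := ‖ω‖
  set r := ‖x₁‖
  set a := ‖x₁ - conj x₂ * x₃‖
  set b := ‖x₂ - conj x₁ * x₃‖
  set c := ‖x₃‖
  change a + b + c ^ 2 < 1 at hx
  change 2 * r + b < 2 at h2
  have hu : 0 ≤ u := norm_nonneg _
  have hb : 0 ≤ b := norm_nonneg _
  have hbound : ‖x₁ + ω * x₂ - conj (x₁ + ω * x₂) * (ω * x₃)‖ ≤
      (1 - u ^ 2) * r + u ^ 2 * a + u * b := by
    rw [sub_conj_mul_eq]
    refine norm_add₃_le.trans (le_of_eq ?_)
    rw [norm_mul, norm_mul, norm_mul, norm_real, norm_real, Real.norm_of_nonneg (by nlinarith),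
      Real.norm_of_nonneg (by positivity)]
  rw [norm_mul]
  -- `1 - ((1 - u²) r + u² (a + c²) + u b)
  --    = (1 - u²)(1 - r - b/2) + u² (1 - a - b - c²) + b (1 - u)² / 2`
  have hu2 : u ^ 2 ≤ 1 := pow_le_one₀ hu hω
  nlinarith [mul_nonneg (mul_nonneg hb (sub_nonneg.2 hω)) (sub_nonneg.2 hω),
    mul_nonneg (sub_nonneg.2 hu2) (by linarith : (0:ℝ) ≤ 2 - 2 * r - b),
    mul_nonneg (sq_nonneg u) (by linarith : (0:ℝ) ≤ 1 - a - b - c ^ 2)]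

/-- For every ω in the closed unit disc, the map `x ↦ (x₁ + ω x₂, ω x₃)`
sends the tetrablock into the symmetrized bidisc. -/
theorem tetrablock_to_symmetrized_bidisc (ω : ℂ) (hω : ‖ω‖ ≤ 1)
    (x : ℂ × ℂ × ℂ) (hx : x ∈ Tetrablock) :
    (x.1 + ω * x.2.1, ω * x.2.2) ∈ SymmetrizedBidisc :=
  SymmetrizedBidisc.mem_of_norm_sub_conj_mul_add_sq_lt
    (Tetrablock.norm_sub_conj_mul_add_sq_lt_one hω hx)
end

section
/- For every ω with |ω| = 1, the map 𝔾₂ ∋ (s, p) ↦ (ω·s/2, s/2, ω·p) ∈ ℂ³ maps the symmetrized bidisc 𝔾₂ into the tetrablock 𝔼. -/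
/-!
Writing `(s, p) = (w₁ + w₂, w₁ w₂)`, the point `(ω s/2, s/2, ω p)` is the image of
`(s/2, s/2, p)` under `(x₁, x₂, x₃) ↦ (ω x₁, x₂, ω x₃)`, which preserves 𝔼 when `|ω| = 1`.
For the diagonal point the defining quantity of 𝔼 is `|s - s̄ p| + |p|²`, and
`s - s̄ p = w₁ (1 - |w₂|²) + w₂ (1 - |w₁|²)`, so with `a = |w₁|`, `b = |w₂|` it is at most
`(a + b)(1 - ab) + a²b² = 1 - (1 - a)(1 - b)(1 - ab) < 1`.
-/

noncomputable def tetrablockDefect (x : ℂ × ℂ × ℂ) : ℝ :=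
  ‖x.1 - (starRingEnd ℂ) x.2.1 * x.2.2‖ + ‖x.2.1 - (starRingEnd ℂ) x.1 * x.2.2‖ + ‖x.2.2‖ ^ 2

theorem mem_tetrablock_iff (x : ℂ × ℂ × ℂ) : x ∈ Tetrablock ↔ tetrablockDefect x < 1 :=
  Iff.rfl

theorem tetrablockDefect_rotate {ω : ℂ} (hω : ‖ω‖ = 1) (x₁ x₂ x₃ : ℂ) :
    tetrablockDefect (ω * x₁, x₂, ω * x₃) = tetrablockDefect (x₁, x₂, x₃) := by
  have hconj : (starRingEnd ℂ) ω * ω = 1 := by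
    rw [Complex.conj_mul', hω]
    norm_num
  have h₁ : ω * x₁ - (starRingEnd ℂ) x₂ * (ω * x₃) = ω * (x₁ - (starRingEnd ℂ) x₂ * x₃) := by
    ring
  have h₂ : x₂ - (starRingEnd ℂ) (ω * x₁) * (ω * x₃) = x₂ - (starRingEnd ℂ) x₁ * x₃ := by
    rw [map_mul]
    linear_combination (-(starRingEnd ℂ) x₁ * x₃) * hconj
  simp only [tetrablockDefect, h₁, h₂, norm_mul, hω, one_mul]

theorem tetrablockDefect_diag (z p : ℂ) :
    tetrablockDefect (z, z, p) = 2 * ‖z - (starRingEnd ℂ) z * p‖ + ‖p‖ ^ 2 := by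
  simp only [tetrablockDefect]
  ring

theorem Complex.norm_one_sub_mul_conj {w : ℂ} (hw : ‖w‖ ≤ 1) :
    ‖1 - w * (starRingEnd ℂ) w‖ = 1 - ‖w‖ ^ 2 := by
  rw [Complex.mul_conj', ← Complex.ofReal_pow, ← Complex.ofReal_one, ← Complex.ofReal_sub,
    Complex.norm_real, Real.norm_of_nonneg]
  nlinarith [norm_nonneg w]

theorem norm_add_sub_conj_add_mul_le {w₁ w₂ : ℂ} (h₁ : ‖w₁‖ ≤ 1) (h₂ : ‖w₂‖ ≤ 1) :
    ‖w₁ + w₂ - (starRingEnd ℂ) (w₁ + w₂) * (w₁ * w₂)‖ ≤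
      (‖w₁‖ + ‖w₂‖) * (1 - ‖w₁‖ * ‖w₂‖) := by
  have hsplit : w₁ + w₂ - (starRingEnd ℂ) (w₁ + w₂) * (w₁ * w₂) =
      w₁ * (1 - w₂ * (starRingEnd ℂ) w₂) + w₂ * (1 - w₁ * (starRingEnd ℂ) w₁) := by
    rw [map_add]
    ring
  calc ‖w₁ + w₂ - (starRingEnd ℂ) (w₁ + w₂) * (w₁ * w₂)‖
      ≤ ‖w₁ * (1 - w₂ * (starRingEnd ℂ) w₂)‖ + ‖w₂ * (1 - w₁ * (starRingEnd ℂ) w₁)‖ :=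
        hsplit ▸ norm_add_le _ _
    _ = ‖w₁‖ * (1 - ‖w₂‖ ^ 2) + ‖w₂‖ * (1 - ‖w₁‖ ^ 2) := by
        rw [norm_mul, norm_mul, Complex.norm_one_sub_mul_conj h₁,
          Complex.norm_one_sub_mul_conj h₂]
    _ = (‖w₁‖ + ‖w₂‖) * (1 - ‖w₁‖ * ‖w₂‖) := by ring

theorem half_half_mem_tetrablock {s p : ℂ} (hsp : (s, p) ∈ SymmetrizedBidisc) :
    (s / 2, s / 2, p) ∈ Tetrablock := by
  obtain ⟨w₁, w₂, h₁, h₂, hsp⟩ := hsp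
  obtain ⟨rfl, rfl⟩ := Prod.mk.inj hsp
  set a := ‖w₁‖
  set b := ‖w₂‖
  have hbound := norm_add_sub_conj_add_mul_le h₁.le h₂.le
  have hhalf : (w₁ + w₂) / 2 - (starRingEnd ℂ) ((w₁ + w₂) / 2) * (w₁ * w₂) =
      (w₁ + w₂ - (starRingEnd ℂ) (w₁ + w₂) * (w₁ * w₂)) / 2 := by
    rw [map_div₀, Complex.conj_ofNat]
    ring
  have hgap : 0 < (1 - a) * (1 - b) * (1 - a * b) := by
    have hab : a * b < 1 := by nlinarith [norm_nonneg w₁, norm_nonneg w₂]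
    exact mul_pos (mul_pos (sub_pos.mpr h₁) (sub_pos.mpr h₂)) (sub_pos.mpr hab)
  rw [mem_tetrablock_iff, tetrablockDefect_diag, hhalf, norm_div, Complex.norm_ofNat, norm_mul]
  nlinarith

/-- For every unimodular ω, the map `(s,p) ↦ (ω s/2, s/2, ω p)` embeds the
symmetrized bidisc into the tetrablock. -/
theorem symmetrized_bidisc_to_tetrablock (ω : ℂ) (hω : ‖ω‖ = 1)
    (s p : ℂ) (hsp : (s, p) ∈ SymmetrizedBidisc) :
    (ω * s / 2, s / 2, ω * p) ∈ Tetrablock := by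
  rw [mul_div_assoc, mem_tetrablock_iff, tetrablockDefect_rotate hω]
  exact half_half_mem_tetrablock hsp
end

section
/- Let β ∈ (0,1), C ∈ (0,1), and ψ : 𝔻 → 𝔻 holomorphic with ψ(0) = −C. Then for every λ, ν ∈ 𝔻 the point φ̃(λ, ν) = ((1−C)ν/(1−Cν), λ(1−C)/(1−Cν), λ(ν−C)/(1−Cν)) lies in the tetrablock 𝔼. -/
set_option maxHeartbeats 2000000 in
/-- Let `β ∈ (0,1)`, `C ∈ (0,1)` and `ψ : 𝔻 → 𝔻` holomorphic with `ψ(0) = −C`.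
Then for all `w, ν ∈ 𝔻` the point
`φ̃(w,ν) = ((1−C)ν/(1−Cν), w(1−C)/(1−Cν), w(ν−C)/(1−Cν))` lies in the
tetrablock. -/
theorem map_into_tetrablock (β C : ℝ)
    (hβ : β ∈ Set.Ioo (0 : ℝ) 1) (hC : C ∈ Set.Ioo (0 : ℝ) 1)
    (ψ : ℂ → ℂ)
    (hψhol : DifferentiableOn ℂ ψ {z : ℂ | ‖z‖ < 1})
    (hψmaps : ∀ z : ℂ, ‖z‖ < 1 → ‖ψ z‖ < 1)
    (hψ0 : ψ 0 = -(C : ℂ)) :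
    ∀ w ν : ℂ, ‖w‖ < 1 → ‖ν‖ < 1 →
      ((1 - (C : ℂ)) * ν / (1 - (C : ℂ) * ν),
        w * (1 - (C : ℂ)) / (1 - (C : ℂ) * ν),
        w * (ν - (C : ℂ)) / (1 - (C : ℂ) * ν)) ∈ Tetrablock := by
  obtain ⟨hC0, hC1⟩ := hC
  intro w ν hw hν
  set a : ℝ := ‖ν‖ with ha
  set b : ℝ := ‖w‖ with hb
  have ha0 : 0 ≤ a := norm_nonneg _
  have hb0 : 0 ≤ b := norm_nonneg _
  set d : ℂ := 1 - (C : ℂ) * ν with hdd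
  set u : ℝ := ‖d‖ with hu'
  have ha2 : a ^ 2 < 1 := pow_lt_one₀ ha0 hν two_ne_zero
  have hb2 : b ^ 2 < 1 := pow_lt_one₀ hb0 hw two_ne_zero
  have hCa : C * a < 1 :=
    lt_of_le_of_lt (by calc C * a ≤ 1 * a := mul_le_mul_of_nonneg_right hC1.le ha0
      _ = a := one_mul a) hν
  have hnormC : ‖(C:ℂ)‖ = C := by
    rw [Complex.norm_real, Real.norm_eq_abs, abs_of_pos hC0]
  have hnCν : ‖(C:ℂ) * ν‖ = C * a := by rw [norm_mul, hnormC, ← ha]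
  have hu : 1 - C * a ≤ u := by
    have h := norm_sub_norm_le (1 : ℂ) ((C:ℂ) * ν)
    rw [norm_one, hnCν] at h
    exact h
  have hu0 : 0 < u := lt_of_lt_of_le (by linarith) hu
  have hd : d ≠ 0 := by
    intro h; rw [h] at hu'; simp [hu'] at hu0
  have hdc : (starRingEnd ℂ) d ≠ 0 := by simpa using hd
  have hsq : ∀ z : ℂ, ‖z‖ ^ 2 = z.re ^ 2 + z.im ^ 2 := by
    intro z
    rw [Complex.sq_norm, Complex.normSq_apply]; ring
  have hasq : a ^ 2 = ν.re ^ 2 + ν.im ^ 2 := hsq ν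
  have husq : u ^ 2 = (1 - C * ν.re) ^ 2 + (C * ν.im) ^ 2 := by
    rw [hu', hsq, hdd]
    simp only [Complex.sub_re, Complex.sub_im, Complex.mul_re, Complex.mul_im,
      Complex.ofReal_re, Complex.ofReal_im, Complex.one_re, Complex.one_im]
    ring
  set m : ℝ := ‖ν - (C:ℂ)‖ with hm'
  have hm0 : 0 ≤ m := norm_nonneg _
  have hmsq : m ^ 2 = u ^ 2 - (1 - C ^ 2) * (1 - a ^ 2) := by
    rw [hm', hsq]
    simp only [Complex.sub_re, Complex.sub_im, Complex.ofReal_re, Complex.ofReal_im]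
    rw [husq, hasq]
    ring
  have hcd : (starRingEnd ℂ) d = 1 - (C:ℂ) * (starRingEnd ℂ) ν := by
    simp [hdd, map_sub, map_mul, Complex.conj_ofReal]
  have hnsqν : Complex.normSq ν = a ^ 2 := by
    rw [ha, Complex.sq_norm]
  have hνν : ν * (starRingEnd ℂ) ν = ((a:ℂ)) ^ 2 := by
    rw [Complex.mul_conj, hnsqν]; push_cast; ring
  have hnsqw : Complex.normSq w = b ^ 2 := by
    rw [hb, Complex.sq_norm]
  have hww : (starRingEnd ℂ) w * w = ((b:ℂ)) ^ 2 := by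
    rw [mul_comm, Complex.mul_conj, hnsqw]; push_cast; ring
  have hucd : ‖(starRingEnd ℂ) d‖ = u := by
    rw [hu']; exact RCLike.norm_conj d
  have hddc : d * (starRingEnd ℂ) d ≠ 0 := mul_ne_zero hd hdc
  have hn1C : ‖(1 : ℂ) - (C:ℂ)‖ = 1 - C := by
    rw [show (1 : ℂ) - (C:ℂ) = ((1 - C : ℝ) : ℂ) by push_cast; ring,
      Complex.norm_real, Real.norm_eq_abs, abs_of_pos (by linarith)]
  -- second term
  have hE2m : (w * (1 - (C:ℂ)) / d - (starRingEnd ℂ) ((1 - (C:ℂ)) * ν / d) * (w * (ν - (C:ℂ)) / d))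
      * (d * (starRingEnd ℂ) d) = (1 - (C:ℂ)) * w * (1 - ((a:ℂ)) ^ 2) := by
    rw [map_div₀, map_mul, map_sub, map_one, Complex.conj_ofReal, sub_mul]
    have l1 : w * (1 - (C:ℂ)) / d * (d * (starRingEnd ℂ) d)
        = w * (1 - (C:ℂ)) * (starRingEnd ℂ) d := by
      rw [div_mul_eq_mul_div, div_eq_iff hd]; ring
    have l2 : (1 - (C:ℂ)) * (starRingEnd ℂ) ν / (starRingEnd ℂ) d * (w * (ν - (C:ℂ)) / d)
        * (d * (starRingEnd ℂ) d) = (1 - (C:ℂ)) * (starRingEnd ℂ) ν * (w * (ν - (C:ℂ))) := by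
      rw [div_mul_div_comm, div_mul_eq_mul_div, div_eq_iff (mul_ne_zero hdc hd)]; ring
    rw [l1, l2, hcd]
    linear_combination (-(1 - (C:ℂ)) * w) * hνν
  have hnE2 : ‖w * (1 - (C:ℂ)) / d - (starRingEnd ℂ) ((1 - (C:ℂ)) * ν / d) * (w * (ν - (C:ℂ)) / d)‖
      = (1 - C) * b * (1 - a ^ 2) / u ^ 2 := by
    have h := congrArg norm hE2m
    rw [norm_mul, norm_mul, norm_mul, norm_mul, hucd, hn1C, ← hu'] at h
    have h2 : ‖(1:ℂ) - ((a:ℂ)) ^ 2‖ = 1 - a ^ 2 := by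
      rw [show ((1:ℂ) - ((a:ℂ))^2) = ((1 - a^2 : ℝ) : ℂ) by push_cast; ring,
        Complex.norm_real, Real.norm_eq_abs, abs_of_pos (by linarith)]
    rw [h2, ← hb] at h
    rw [eq_div_iff (by positivity : (u:ℝ)^2 ≠ 0), show (u:ℝ)^2 = u*u from sq u]
    linarith [h]
  set A : ℂ := ν * (starRingEnd ℂ) d - ((b:ℂ)) ^ 2 * (ν - (C:ℂ)) with hA'
  have hE1m : ((1 - (C:ℂ)) * ν / d - (starRingEnd ℂ) (w * (1 - (C:ℂ)) / d) * (w * (ν - (C:ℂ)) / d))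
      * (d * (starRingEnd ℂ) d) = (1 - (C:ℂ)) * A := by
    rw [map_div₀, map_mul, map_sub, map_one, Complex.conj_ofReal, sub_mul]
    have l1 : (1 - (C:ℂ)) * ν / d * (d * (starRingEnd ℂ) d)
        = (1 - (C:ℂ)) * ν * (starRingEnd ℂ) d := by
      rw [div_mul_eq_mul_div, div_eq_iff hd]; ring
    have l2 : (starRingEnd ℂ) w * (1 - (C:ℂ)) / (starRingEnd ℂ) d * (w * (ν - (C:ℂ)) / d)
        * (d * (starRingEnd ℂ) d) = (starRingEnd ℂ) w * (1 - (C:ℂ)) * (w * (ν - (C:ℂ))) := by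
      rw [div_mul_div_comm, div_mul_eq_mul_div, div_eq_iff (mul_ne_zero hdc hd)]; ring
    rw [l1, l2, hA']
    linear_combination (-(1 - (C:ℂ)) * (ν - (C:ℂ))) * hww
  have hAbound : ‖A‖ ≤ (1 - b ^ 2) * (a * u) + C * b ^ 2 * (1 - a ^ 2) := by
    have hrw : A = ((1 - b^2 : ℝ) : ℂ) * (ν * (starRingEnd ℂ) d) + ((C * b^2 * (1 - a^2) : ℝ) : ℂ) := by
      rw [hA', hcd]
      push_cast
      linear_combination (-(C:ℂ) * ((b:ℂ))^2) * hνν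
    rw [hrw]
    refine le_trans (norm_add_le _ _) ?_
    rw [norm_mul, norm_mul, hucd, Complex.norm_real, Complex.norm_real,
      Real.norm_eq_abs, Real.norm_eq_abs, abs_of_nonneg (by linarith : (0:ℝ) ≤ 1 - b^2),
      abs_of_nonneg (mul_nonneg (mul_nonneg hC0.le (sq_nonneg b)) (by linarith : (0:ℝ) ≤ 1 - a^2)), ← ha]
  have hnE1 : ‖(1 - (C:ℂ)) * ν / d - (starRingEnd ℂ) (w * (1 - (C:ℂ)) / d) * (w * (ν - (C:ℂ)) / d)‖
      = (1 - C) * ‖A‖ / u ^ 2 := by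
    have h := congrArg norm hE1m
    rw [norm_mul, norm_mul, norm_mul, hucd, hn1C, ← hu'] at h
    rw [eq_div_iff (by positivity : (u:ℝ)^2 ≠ 0), show (u:ℝ)^2 = u*u from sq u]
    linarith [h]
  -- third term
  have hnE3 : ‖w * (ν - (C:ℂ)) / d‖ ^ 2 = b ^ 2 * m ^ 2 / u ^ 2 := by
    rw [norm_div, norm_mul, ← hu', ← hb, ← hm']
    ring
  -- assemble
  show ‖_‖ + ‖_‖ + ‖_‖ ^ 2 < 1
  rw [hnE1, hnE2, hnE3]
  rw [← add_div, ← add_div, div_lt_one (by positivity)]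
  have hAcomb : (1 - C) * ‖A‖ ≤ (1 - C) * ((1 - b ^ 2) * (a * u) + C * b ^ 2 * (1 - a ^ 2)) :=
    mul_le_mul_of_nonneg_left hAbound (by linarith)
  have key : (1 - C) * ((1 - b ^ 2) * (a * u) + C * b ^ 2 * (1 - a ^ 2))
      + (1 - C) * b * (1 - a ^ 2) + b ^ 2 * (u ^ 2 - (1 - C ^ 2) * (1 - a ^ 2)) < u ^ 2 := by
    have ha1 : a < 1 := hν
    have hb1 : b < 1 := hw
    have hstep : 1 - a ≤ u - (1 - C) * a := by linarith [hu]
    have e1 : u ^ 2 - ((1 - C) * ((1 - b ^ 2) * (a * u) + C * b ^ 2 * (1 - a ^ 2))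
        + (1 - C) * b * (1 - a ^ 2) + b ^ 2 * (u ^ 2 - (1 - C ^ 2) * (1 - a ^ 2)))
        = (1 - b ^ 2) * (u * (u - (1 - C) * a)) - (1 - C) * (1 - a ^ 2) * b * (1 - b) := by
      ring
    have h1 : (1 - b ^ 2) * ((1 - C * a) * (1 - a)) ≤ (1 - b ^ 2) * (u * (u - (1 - C) * a)) := by
      apply mul_le_mul_of_nonneg_left _ (by linarith : (0:ℝ) ≤ 1 - b ^ 2)
      exact mul_le_mul hu hstep (by linarith) (le_of_lt hu0)
    have h3 : 0 < (1 + b) * (1 - C * a) - (1 - C) * (1 + a) * b := by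
      rcases le_total a b with h | h
      · have h5 : 0 ≤ C * (b - a) := mul_nonneg hC0.le (by linarith)
        have h6 : a * b ≤ 1 * b := mul_le_mul_of_nonneg_right hν.le hb0
        nlinarith [h5, h6]
      · have h5 : C * (a - b) ≤ 1 * (a - b) := mul_le_mul_of_nonneg_right hC1.le (by linarith)
        have h6 : 0 < (1 - a) * (1 + b) := mul_pos (by linarith) (by linarith)
        nlinarith [h5, h6]
    have h2 : (1 - b ^ 2) * ((1 - C * a) * (1 - a)) - (1 - C) * (1 - a ^ 2) * b * (1 - b)
        = (1 - a) * (1 - b) * ((1 + b) * (1 - C * a) - (1 - C) * (1 + a) * b) := by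
      ring
    have h4 : 0 < (1 - a) * (1 - b) * ((1 + b) * (1 - C * a) - (1 - C) * (1 + a) * b) :=
      mul_pos (mul_pos (by linarith) (by linarith)) h3
    linarith [h1, h4, e1, h2]
  rw [hmsq]
  linarith [hAcomb, key]
end

section
/- If G : 𝔻² → 𝔻 is holomorphic, Z : 𝔻 → 𝔻 is holomorphic with |Z(λ)| < |λ| for λ ≠ 0, and G(λ, Z(λ)) = λ for all λ ∈ 𝔻, then G(z₁, z₂) = z₁ for all (z₁, z₂) ∈ 𝔻²; i.e. the left inverse of the geodesic λ ↦ (λ, Z(λ)) in the bidisc is unique and equals the first-coordinate projection. -/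
open Metric Set Filter Topology

/-- Uniqueness of the left inverse for non-automorphism-pair geodesics of the
bidisc: if `G : 𝔻² → 𝔻` is holomorphic, `Z : 𝔻 → 𝔻` is holomorphic with
`|Z(w)| < |w|` for `w ≠ 0`, and `G(w, Z(w)) = w` on 𝔻, then `G` is the
projection onto the first coordinate. -/
theorem unique_left_inverse_bidisc (G : ℂ × ℂ → ℂ)
    (hGhol : DifferentiableOn ℂ G {z : ℂ × ℂ | ‖z.1‖ < 1 ∧ ‖z.2‖ < 1})
    (hGmaps : ∀ z : ℂ × ℂ, ‖z.1‖ < 1 → ‖z.2‖ < 1 → ‖G z‖ < 1)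
    (Z : ℂ → ℂ)
    (hZhol : DifferentiableOn ℂ Z {z : ℂ | ‖z‖ < 1})
    (hZmaps : ∀ w : ℂ, ‖w‖ < 1 → ‖Z w‖ < 1)
    (hZlt : ∀ w : ℂ, ‖w‖ < 1 → w ≠ 0 → ‖Z w‖ < ‖w‖)
    (hleft : ∀ w : ℂ, ‖w‖ < 1 → G (w, Z w) = w) :
    ∀ z : ℂ × ℂ, ‖z.1‖ < 1 → ‖z.2‖ < 1 → G z = z.1 := by
  have hball : {z : ℂ | ‖z‖ < 1} = ball (0 : ℂ) 1 := by
    ext z; simp [mem_ball_zero_iff]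
  have hopen2 : IsOpen {z : ℂ × ℂ | ‖z.1‖ < 1 ∧ ‖z.2‖ < 1} := by
    have : {z : ℂ × ℂ | ‖z.1‖ < 1 ∧ ‖z.2‖ < 1} = (ball (0:ℂ) 1) ×ˢ (ball (0:ℂ) 1) := by
      ext z; simp [mem_ball_zero_iff]
    rw [this]; exact isOpen_ball.prod isOpen_ball
  -- Z 0 = 0
  have hZ0 : Z 0 = 0 := by
    have hcont : ContinuousAt Z 0 := by
      refine (hZhol.differentiableAt ?_).continuousAt
      rw [hball]
      exact isOpen_ball.mem_nhds (by simp)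
    have h1 : Tendsto (fun w : ℂ => ‖Z w‖) (𝓝[≠] (0:ℂ)) (𝓝 ‖Z 0‖) :=
      (hcont.norm.tendsto).mono_left nhdsWithin_le_nhds
    have h2 : Tendsto (fun w : ℂ => ‖w‖) (𝓝[≠] (0:ℂ)) (𝓝 (0:ℝ)) := by
      simpa using (continuous_norm.tendsto (0:ℂ)).mono_left nhdsWithin_le_nhds
    have hev : ∀ᶠ w : ℂ in 𝓝[≠] (0:ℂ), ‖Z w‖ ≤ ‖w‖ := by
      have hmem : ball (0:ℂ) 1 ∈ 𝓝[≠] (0:ℂ) :=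
        nhdsWithin_le_nhds (isOpen_ball.mem_nhds (by simp))
      filter_upwards [hmem, self_mem_nhdsWithin] with w hw hw'
      exact le_of_lt (hZlt w (by simpa [mem_ball_zero_iff] using hw) hw')
    have : ‖Z 0‖ ≤ 0 := le_of_tendsto_of_tendsto h1 h2 hev
    simpa using le_antisymm this (norm_nonneg _)
  have hG00 : G (0, 0) = 0 := by
    have := hleft 0 (by simp)
    rwa [hZ0] at this
  -- Schwarz: for `‖μ‖ < 1`, `‖G (λ, λ * μ)‖ ≤ ‖λ‖`
  have hdiffμ : ∀ μ : ℂ, ‖μ‖ < 1 →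
      DifferentiableOn ℂ (fun l : ℂ => G (l, l * μ)) (ball (0:ℂ) 1) := by
    intro μ hμ
    have hmaps : MapsTo (fun l : ℂ => (l, l * μ)) (ball (0:ℂ) 1)
        {z : ℂ × ℂ | ‖z.1‖ < 1 ∧ ‖z.2‖ < 1} := by
      intro l hl
      have hl' : ‖l‖ < 1 := by simpa [mem_ball_zero_iff] using hl
      refine ⟨hl', ?_⟩
      calc ‖l * μ‖ = ‖l‖ * ‖μ‖ := norm_mul _ _
        _ ≤ ‖l‖ * 1 := by nlinarith [norm_nonneg l, norm_nonneg μ]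
        _ < 1 := by simpa using hl'
    exact hGhol.comp ((differentiable_id.prodMk (differentiable_id.mul_const μ)).differentiableOn)
      hmaps
  have hschwarz : ∀ μ : ℂ, ‖μ‖ < 1 → ∀ l : ℂ, ‖l‖ < 1 → ‖G (l, l * μ)‖ ≤ ‖l‖ := by
    intro μ hμ l hl
    have hmapsf : MapsTo (fun l : ℂ => G (l, l * μ)) (ball (0:ℂ) 1) (ball (0:ℂ) 1) := by
      intro x hx
      have hx' : ‖x‖ < 1 := by simpa [mem_ball_zero_iff] using hx
      have hxm : ‖x * μ‖ < 1 := by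
        calc ‖x * μ‖ = ‖x‖ * ‖μ‖ := norm_mul _ _
          _ ≤ ‖x‖ * 1 := by nlinarith [norm_nonneg x, norm_nonneg μ]
          _ < 1 := by simpa using hx'
      simpa [mem_ball_zero_iff] using hGmaps (x, x * μ) hx' hxm
    have h0 : G ((0:ℂ), (0:ℂ) * μ) = 0 := by simpa using hG00
    simpa using
      Complex.norm_le_norm_of_mapsTo_ball (hdiffμ μ hμ) (hmapsf.mono_right ball_subset_closedBall) h0
        (by simpa using hl)
  -- Constancy in the second variable below the diagonal
  have hconst : ∀ l : ℂ, ‖l‖ < 1 → l ≠ 0 → ∀ w : ℂ, ‖w‖ < ‖l‖ → G (l, w) = l := by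
    intro l hl hl0 w hw
    set k : ℂ → ℂ := fun μ => G (l, l * μ) with hk
    have hkdiff : DifferentiableOn ℂ k (ball (0:ℂ) 1) := by
      have hmaps : MapsTo (fun μ : ℂ => (l, l * μ)) (ball (0:ℂ) 1)
          {z : ℂ × ℂ | ‖z.1‖ < 1 ∧ ‖z.2‖ < 1} := by
        intro μ hμ
        have hμ' : ‖μ‖ < 1 := by simpa [mem_ball_zero_iff] using hμ
        refine ⟨hl, ?_⟩
        calc ‖l * μ‖ = ‖l‖ * ‖μ‖ := norm_mul _ _
          _ < 1 * 1 := by nlinarith [norm_nonneg l, norm_nonneg μ]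
          _ = 1 := by ring
      exact hGhol.comp
        ((differentiable_const l).prodMk ((differentiable_const l).mul differentiable_id)).differentiableOn
        hmaps
    have hlpos : (0:ℝ) < ‖l‖ := norm_pos_iff.2 hl0
    set μ₀ : ℂ := Z l / l with hμ₀
    have hμ₀mem : μ₀ ∈ ball (0:ℂ) 1 := by
      rw [mem_ball_zero_iff, hμ₀, norm_div, div_lt_one hlpos]
      exact hZlt l hl hl0
    have hkμ₀ : k μ₀ = l := by
      rw [hk]
      simp only [hμ₀]
      rw [mul_div_cancel₀ _ hl0]
      exact hleft l hl
    have hmax : IsMaxOn (norm ∘ k) (ball (0:ℂ) 1) μ₀ := by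
      intro μ hμ
      have hμ' : ‖μ‖ < 1 := by simpa [mem_ball_zero_iff] using hμ
      have : ‖k μ‖ ≤ ‖l‖ := hschwarz μ hμ' l hl
      simpa [Function.comp, hkμ₀] using this
    have heq : EqOn k (Function.const ℂ (k μ₀)) (ball (0:ℂ) 1) :=
      Complex.eqOn_of_isPreconnected_of_isMaxOn_norm (convex_ball 0 1).isPreconnected
        isOpen_ball hkdiff hμ₀mem hmax
    have hwl : w / l ∈ ball (0:ℂ) 1 := by
      rw [mem_ball_zero_iff, norm_div, div_lt_one hlpos]; exact hw
    have := heq hwl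
    rw [hkμ₀] at this
    simp only [hk, Function.const] at this
    rwa [mul_div_cancel₀ _ hl0] at this
  -- Identity principle in the first variable
  rintro ⟨z₁, z₂⟩ h₁ h₂
  simp only at h₁ h₂ ⊢
  set f : ℂ → ℂ := fun l => G (l, z₂) with hf
  have hfdiff : DifferentiableOn ℂ f (ball (0:ℂ) 1) := by
    have hmaps : MapsTo (fun l : ℂ => (l, z₂)) (ball (0:ℂ) 1)
        {z : ℂ × ℂ | ‖z.1‖ < 1 ∧ ‖z.2‖ < 1} := by
      intro l hl
      exact ⟨by simpa [mem_ball_zero_iff] using hl, h₂⟩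
    exact hGhol.comp ((differentiable_id.prodMk (differentiable_const z₂)).differentiableOn) hmaps
  have hfan : AnalyticOnNhd ℂ f (ball (0:ℂ) 1) := hfdiff.analyticOnNhd isOpen_ball
  have hgan : AnalyticOnNhd ℂ (fun l : ℂ => l) (ball (0:ℂ) 1) :=
    (differentiable_id.differentiableOn).analyticOnNhd isOpen_ball
  set r : ℝ := (‖z₂‖ + 1) / 2 with hr
  have hz₂r : ‖z₂‖ < r := by rw [hr]; linarith
  have hr1 : r < 1 := by rw [hr]; linarith
  have hrpos : (0:ℝ) < r := lt_of_le_of_lt (norm_nonneg z₂) hz₂r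
  have hz₀mem : (r : ℂ) ∈ ball (0:ℂ) 1 := by
    rw [mem_ball_zero_iff]
    simpa [abs_of_pos hrpos] using hr1
  have hVopen : IsOpen {l : ℂ | ‖z₂‖ < ‖l‖ ∧ ‖l‖ < 1} :=
    (isOpen_lt continuous_const continuous_norm).inter
      (isOpen_lt continuous_norm continuous_const)
  have hnr : ‖(r : ℂ)‖ = r := by
    simp [Complex.norm_real, abs_of_pos hrpos]
  have hz₀V : (r : ℂ) ∈ {l : ℂ | ‖z₂‖ < ‖l‖ ∧ ‖l‖ < 1} := by
    exact ⟨by rw [hnr]; exact hz₂r, by rw [hnr]; exact hr1⟩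
  have hfg : f =ᶠ[nhds (r : ℂ)] (fun l : ℂ => l) := by
    filter_upwards [hVopen.mem_nhds hz₀V] with l hl
    obtain ⟨hla, hlb⟩ := hl
    have hl0 : l ≠ 0 := by
      rintro rfl
      exact (norm_nonneg z₂).not_gt (by simpa using hla)
    exact hconst l hlb hl0 z₂ hla
  have := hfan.eqOn_of_preconnected_of_eventuallyEq hgan (convex_ball 0 1).isPreconnected
    hz₀mem hfg (mem_ball_zero_iff.2 h₁)
  simpa [hf] using this
end

section
/- Let D ⊂ ℂⁿ (n ≥ 2) be a convex domain, σ ∈ 𝔻 \ {0}, and let f¹, …, fⁿ : 𝔻 → D be complex geodesics with f¹(0) = ⋯ = fⁿ(0) = w and f¹(σ) = ⋯ = fⁿ(σ) = z, such that for some λ₀ ∈ 𝔻 the vectors f¹(λ₀) − fⁿ(λ₀), …, f^{n−1}(λ₀) − fⁿ(λ₀) are linearly independent. Then there is exactly one holomorphic F : D → 𝔻 satisfying F ∘ f = id_𝔻 for every complex geodesic f : 𝔻 → D with f(0) = w, f(σ) = z. -/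
/-!
A left inverse `F` of one geodesic with `0 ↦ w`, `σ ↦ z` is a left inverse of every such
geodesic `g`: by the Schwarz lemma, `F ∘ g` fixes `0` and `σ ≠ 0`, hence is the identity.

For uniqueness, convexity makes `λ ↦ Φ (λ, s) = f⁰(λ) + ∑ⱼ sⱼ (f^{j+1}(λ) - f⁰(λ))` such a
geodesic for real weights `s` in the simplex, so every left inverse `F` satisfies
`F (Φ (λ, s)) = λ` there.
This holomorphic identity persists for complex `s` near a real interior point `p₀`.
Differentiating it, together with the affine independence of the `fⁱ(λ₀)`, shows that `DΦ(p₀)`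
is injective, so `Φ` is open at `p₀` and any two left inverses agree near `Φ p₀`; the
identity theorem on the connected set `D` concludes.
-/

/-- `f : 𝔻 → D` is a complex geodesic of `D ⊆ ℂⁿ`: it is holomorphic, maps 𝔻
into `D`, and admits a holomorphic left inverse `g : D → 𝔻` with `g ∘ f = id`. -/
def IsComplexGeodesic {n : ℕ} (D : Set (Fin n → ℂ)) (f : ℂ → Fin n → ℂ) : Prop :=
  DifferentiableOn ℂ f {w : ℂ | ‖w‖ < 1} ∧
  (∀ w : ℂ, ‖w‖ < 1 → f w ∈ D) ∧
  ∃ g : (Fin n → ℂ) → ℂ, DifferentiableOn ℂ g D ∧ (∀ x ∈ D, ‖g x‖ < 1) ∧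
    ∀ w : ℂ, ‖w‖ < 1 → g (f w) = w

open Metric Filter Topology Set

theorem Complex.eqOn_id_of_mapsTo_ball_of_eq_self {φ : ℂ → ℂ}
    (hd : DifferentiableOn ℂ φ (ball 0 1)) (hmaps : MapsTo φ (ball 0 1) (ball 0 1))
    (h0 : φ 0 = 0) {σ : ℂ} (hσ : σ ∈ ball (0 : ℂ) 1) (hσ0 : σ ≠ 0) (hσσ : φ σ = σ) :
    EqOn φ id (ball 0 1) := by
  have hslope : dslope φ 0 σ = 1 := by
    rw [dslope_of_ne _ hσ0, slope_def_field, h0, hσσ, sub_zero, div_self hσ0]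
  have haffine := Complex.affine_of_mapsTo_ball_of_norm_dslope_eq_div hd
    (by rw [h0]; exact hmaps.mono_right ball_subset_closedBall) hσ (by rw [hslope]; norm_num)
  intro x hx
  simpa [h0, hslope] using haffine hx

theorem comp_eq_self_of_eq_zero_of_eq_self {E : Type*} [NormedAddCommGroup E]
    [NormedSpace ℂ E] {D : Set E} {F : E → ℂ} (hF : DifferentiableOn ℂ F D)
    (hFD : ∀ x ∈ D, ‖F x‖ < 1) {g : ℂ → E} (hg : DifferentiableOn ℂ g {v | ‖v‖ < 1})
    (hgD : ∀ v : ℂ, ‖v‖ < 1 → g v ∈ D) {σ : ℂ} (hσ : ‖σ‖ < 1) (hσ0 : σ ≠ 0)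
    (h0 : F (g 0) = 0) (hσσ : F (g σ) = σ) : ∀ v : ℂ, ‖v‖ < 1 → F (g v) = v := by
  have hdisc : {v : ℂ | ‖v‖ < 1} = ball 0 1 := by ext; simp
  rw [hdisc] at hg
  have hgD' : MapsTo g (ball 0 1) D := fun v hv => hgD v (mem_ball_zero_iff.mp hv)
  intro v hv
  exact Complex.eqOn_id_of_mapsTo_ball_of_eq_self (hF.comp hg hgD')
    (fun u hu => mem_ball_zero_iff.mpr (hFD _ (hgD' hu))) h0 (mem_ball_zero_iff.mpr hσ) hσ0 hσσ
    (mem_ball_zero_iff.mpr hv)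

def IsGeodesicLeftInverse {n : ℕ} (D : Set (Fin n → ℂ)) (σ : ℂ) (w z : Fin n → ℂ)
    (F : (Fin n → ℂ) → ℂ) : Prop :=
  DifferentiableOn ℂ F D ∧ (∀ x ∈ D, ‖F x‖ < 1) ∧
    ∀ g : ℂ → Fin n → ℂ, IsComplexGeodesic D g → g 0 = w → g σ = z →
      ∀ v : ℂ, ‖v‖ < 1 → F (g v) = v

section Geodesics

variable {n : ℕ} {D : Set (Fin n → ℂ)} {σ : ℂ} {w z : Fin n → ℂ}

theorem IsComplexGeodesic.exists_isGeodesicLeftInverse {f : ℂ → Fin n → ℂ}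
    (hf : IsComplexGeodesic D f) (hf0 : f 0 = w) (hfσ : f σ = z) (hσ : ‖σ‖ < 1)
    (hσ0 : σ ≠ 0) : ∃ F, IsGeodesicLeftInverse D σ w z F := by
  obtain ⟨-, -, F, hF, hFD, hinv⟩ := hf
  refine ⟨F, hF, hFD, fun g hg hg0 hgσ => comp_eq_self_of_eq_zero_of_eq_self hF hFD hg.1 hg.2.1
    hσ hσ0 ?_ ?_⟩
  · rw [hg0, ← hf0, hinv 0 (by simp)]
  · rw [hgσ, ← hfσ, hinv σ hσ]

theorem isComplexGeodesic_sum_smul {ι : Type*} [Fintype ι] (hD : Convex ℝ D) (hσ : ‖σ‖ < 1)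
    (hσ0 : σ ≠ 0) {f : ι → ℂ → Fin n → ℂ} (hf : ∀ i, IsComplexGeodesic D (f i))
    (hf0 : ∀ i, f i 0 = w) (hfσ : ∀ i, f i σ = z) {t : ι → ℝ} (ht0 : ∀ i, 0 ≤ t i)
    (ht1 : ∑ i, t i = 1) :
    IsComplexGeodesic D (fun l => ∑ i, t i • f i l) ∧
      ∑ i, t i • f i 0 = w ∧ ∑ i, t i • f i σ = z := by
  have hG0 : ∑ i, t i • f i 0 = w := by simp [hf0, ← Finset.sum_smul, ht1]
  have hGσ : ∑ i, t i • f i σ = z := by simp [hfσ, ← Finset.sum_smul, ht1]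
  obtain ⟨i₀⟩ : Nonempty ι := not_isEmpty_iff.mp fun _ => by simp at ht1
  obtain ⟨-, -, F, hF, hFD, hinv⟩ := hf i₀
  have hGd : DifferentiableOn ℂ (fun l => ∑ i, t i • f i l) {v | ‖v‖ < 1} :=
    DifferentiableOn.fun_sum fun i _ => (hf i).1.const_smul (t i)
  have hGD : ∀ v : ℂ, ‖v‖ < 1 → ∑ i, t i • f i v ∈ D := fun v hv =>
    hD.sum_mem (fun i _ => ht0 i) ht1 fun i _ => (hf i).2.1 v hv
  refine ⟨⟨hGd, hGD, F, hF, hFD, comp_eq_self_of_eq_zero_of_eq_self hF hFD hGd hGD hσ hσ0 ?_ ?_⟩,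
    hG0, hGσ⟩
  · rw [hG0, ← hf0 i₀, hinv 0 (by simp)]
  · rw [hGσ, ← hfσ i₀, hinv σ hσ]

end Geodesics

section IdentityTheorem

variable {E : Type*} [NormedAddCommGroup E] [NormedSpace ℂ E] {U : Set E} {h : E → ℂ}

theorem eq_zero_of_frequently_eq_zero_on_line (hU : IsOpen U) (hUc : Convex ℝ U)
    (hh : DifferentiableOn ℂ h U) {a b : E} (ha : a ∈ U)
    (hfreq : ∃ᶠ ζ in 𝓝[≠] (0 : ℂ), h (a + ζ • b) = 0) {ζ : ℂ} (hζ : a + ζ • b ∈ U) :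
    h (a + ζ • b) = 0 := by
  set line : ℂ → E := fun ζ => a + ζ • b
  have hline : Continuous line := by fun_prop
  have hopen : IsOpen (line ⁻¹' U) := hU.preimage hline
  have hconv : Convex ℝ (line ⁻¹' U) := by
    intro x hx y hy s t hs ht hst
    change a + (s • x + t • y) • b ∈ U
    convert hUc hx hy hs ht hst using 1
    rw [smul_add, smul_add, add_add_add_comm, ← add_smul, hst, one_smul, add_smul, smul_assoc,
      smul_assoc]
  have hanalytic : AnalyticOnNhd ℂ (fun ζ => h (line ζ)) (line ⁻¹' U) :=
    (hh.comp (by fun_prop : Differentiable ℂ line).differentiableOn fun _ hx => hx).analyticOnNhd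
      hopen
  exact hanalytic.eqOn_zero_of_preconnected_of_frequently_eq_zero hconv.isPreconnected
    (by simpa [line] using ha) hfreq hζ

theorem eqOn_zero_of_eventuallyEq_zero_of_convex (hU : IsOpen U) (hUc : Convex ℝ U)
    (hh : DifferentiableOn ℂ h U) {a : E} (ha : a ∈ U) (hev : h =ᶠ[𝓝 a] 0) : EqOn h 0 U := by
  intro p hp
  have hline : Tendsto (fun ζ : ℂ => a + ζ • (p - a)) (𝓝 0) (𝓝 a) := by
    convert (by fun_prop : Continuous fun ζ : ℂ => a + ζ • (p - a)).tendsto 0 using 2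
    simp
  have hfreq : ∃ᶠ ζ in 𝓝[≠] (0 : ℂ), h (a + ζ • (p - a)) = 0 :=
    ((hline.eventually hev).filter_mono nhdsWithin_le_nhds).frequently
  simpa using eq_zero_of_frequently_eq_zero_on_line hU hUc hh ha hfreq (ζ := 1) (by simpa)

theorem eqOn_of_eventuallyEq_of_isPreconnected (hU : IsOpen U) (hUc : IsPreconnected U)
    {F₁ F₂ : E → ℂ} (hF₁ : DifferentiableOn ℂ F₁ U) (hF₂ : DifferentiableOn ℂ F₂ U) {a : E}
    (ha : a ∈ U) (hev : F₁ =ᶠ[𝓝 a] F₂) : EqOn F₁ F₂ U := by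
  set S := {x | (F₁ - F₂) =ᶠ[𝓝 x] 0}
  have hSopen : IsOpen S := isOpen_setOfPred_eventually_nhds
  have hclosed : closure S ∩ U ⊆ S := by
    rintro y ⟨hyS, hyU⟩
    obtain ⟨ρ, hρ, hball⟩ := Metric.isOpen_iff.mp hU y hyU
    obtain ⟨x, hxS, hxy⟩ := Metric.mem_closure_iff.mp hyS ρ hρ
    have hzero := eqOn_zero_of_eventuallyEq_zero_of_convex isOpen_ball (convex_ball y ρ)
      ((hF₁.sub hF₂).mono hball) (mem_ball'.mpr hxy) hxS
    exact eventually_of_mem (ball_mem_nhds y hρ) hzero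
  have hUS := hUc.subset_of_closure_inter_subset hSopen
    ⟨a, ha, hev.mono fun x hx => by simp [hx]⟩ hclosed
  exact fun x hx => sub_eq_zero.mp (hUS hx).eq_of_nhds

end IdentityTheorem

theorem eqOn_zero_of_eq_zero_of_im_eq_zero {ι : Type*} [Fintype ι] {h : ℂ × (ι → ℂ) → ℂ}
    {p₀ : ℂ × (ι → ℂ)} {r : ℝ} (hp₀ : ∀ j, (p₀.2 j).im = 0)
    (hh : DifferentiableOn ℂ h (ball p₀ r))
    (hreal : ∀ p ∈ ball p₀ r, (∀ j, (p.2 j).im = 0) → h p = 0) : EqOn h 0 (ball p₀ r) := by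
  intro p hp
  -- `p = a + I • b` with `a`, `b` real in the second factor; `h` vanishes at the real points
  -- of the complex line `ζ ↦ a + ζ • b`, hence at `ζ = I`.
  set a : ℂ × (ι → ℂ) := (p.1, fun j => ((p.2 j).re : ℂ))
  set b : ℂ × (ι → ℂ) := (0, fun j => ((p.2 j).im : ℂ))
  have hab : a + Complex.I • b = p := by
    ext j <;> simp [a, b, mul_comm Complex.I, Complex.re_add_im]
  have hre : ∀ j, ((p.2 j).re : ℂ) - p₀.2 j = ((p.2 j - p₀.2 j).re : ℂ) := fun j =>
    Complex.ext (by simp) (by simp [hp₀ j])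
  have ha : a ∈ ball p₀ r := by
    refine mem_ball.mpr (lt_of_le_of_lt ?_ (mem_ball.mp hp))
    rw [Prod.dist_eq, Prod.dist_eq]
    refine max_le_max le_rfl ((dist_pi_le_iff dist_nonneg).mpr fun j => ?_)
    refine le_trans ?_ (dist_le_pi_dist p.2 p₀.2 j)
    rw [Complex.dist_eq, Complex.dist_eq, hre, Complex.norm_real, Real.norm_eq_abs]
    exact Complex.abs_re_le_norm _
  have hev : ∀ᶠ t : ℝ in 𝓝 0, h (a + (t : ℂ) • b) = 0 := by
    have hcont : Continuous fun t : ℝ => a + (t : ℂ) • b := by fun_prop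
    filter_upwards [hcont.continuousAt.preimage_mem_nhds (by simpa using isOpen_ball.mem_nhds ha)]
      with t ht
    exact hreal _ ht fun j => by simp [a, b]
  have hfreq : ∃ᶠ ζ in 𝓝[≠] (0 : ℂ), h (a + ζ • b) = 0 := by
    have hofReal : Tendsto (fun t : ℝ => (t : ℂ)) (𝓝[≠] 0) (𝓝[≠] 0) :=
      tendsto_nhdsWithin_of_tendsto_nhds_of_eventually_within _
        ((Complex.continuous_ofReal.tendsto' 0 0 Complex.ofReal_zero).mono_left
          nhdsWithin_le_nhds)
        (eventually_nhdsWithin_of_forall fun t ht => by simpa using ht)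
    exact hofReal.frequently (hev.filter_mono nhdsWithin_le_nhds).frequently
  rw [← hab]
  exact eq_zero_of_frequently_eq_zero_on_line isOpen_ball (convex_ball p₀ r) hh ha hfreq
    (hab ▸ hp)

section GeodesicCombination

variable {n m : ℕ} {D : Set (Fin n → ℂ)} {σ : ℂ} {w z : Fin n → ℂ}
  {f : Fin (m + 1) → ℂ → Fin n → ℂ}

-- Only `m` of the `m + 1` convex weights are free parameters, so that for `n = m + 1` the
-- parameter space `ℂ × ℂᵐ` has the dimension of the target.
def geodesicCombination (f : Fin (m + 1) → ℂ → Fin n → ℂ) (p : ℂ × (Fin m → ℂ)) :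
    Fin n → ℂ :=
  f 0 p.1 + ∑ j, p.2 j • (f j.succ p.1 - f 0 p.1)

theorem geodesicCombination_ofReal (l : ℂ) (s : Fin m → ℝ) :
    geodesicCombination f (l, fun j => (s j : ℂ)) =
      ∑ i, (Fin.cons (1 - ∑ j, s j) s : Fin (m + 1) → ℝ) i • f i l := by
  simp only [geodesicCombination, Fin.sum_univ_succ, Fin.cons_zero, Fin.cons_succ, sub_smul,
    one_smul, Finset.sum_smul, smul_sub, Finset.sum_sub_distrib, Complex.coe_smul]
  abel

theorem analyticAt_geodesicCombination {p : ℂ × (Fin m → ℂ)}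
    (hf : ∀ i, AnalyticAt ℂ (f i) p.1) : AnalyticAt ℂ (geodesicCombination f) p := by
  have hfst : ∀ i, AnalyticAt ℂ (fun q : ℂ × (Fin m → ℂ) => f i q.1) p := fun i =>
    (hf i).comp analyticAt_fst
  unfold geodesicCombination
  refine (hfst 0).add (Finset.analyticAt_fun_sum _ fun j _ => ?_)
  exact ((ContinuousLinearMap.proj j).analyticAt _ |>.comp analyticAt_snd).smul
    ((hfst j.succ).sub (hfst 0))

theorem isComplexGeodesic_geodesicCombination (hD : Convex ℝ D) (hσ : ‖σ‖ < 1) (hσ0 : σ ≠ 0)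
    (hf : ∀ i, IsComplexGeodesic D (f i)) (hf0 : ∀ i, f i 0 = w) (hfσ : ∀ i, f i σ = z)
    {s : Fin m → ℝ} (hs0 : ∀ j, 0 ≤ s j) (hs1 : ∑ j, s j ≤ 1) :
    IsComplexGeodesic D (fun l => geodesicCombination f (l, fun j => (s j : ℂ))) ∧
      geodesicCombination f (0, fun j => (s j : ℂ)) = w ∧
      geodesicCombination f (σ, fun j => (s j : ℂ)) = z := by
  simp only [geodesicCombination_ofReal]
  refine isComplexGeodesic_sum_smul hD hσ hσ0 hf hf0 hfσ (fun i => ?_) ?_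
  · cases i using Fin.cases with
    | zero => simpa using hs1
    | succ j => simpa using hs0 j
  · simp [Fin.sum_univ_succ]

end GeodesicCombination

section LocalUniqueness

variable {n m : ℕ} {D : Set (Fin n → ℂ)} {σ : ℂ} {w z : Fin n → ℂ}
  {f : Fin (m + 1) → ℂ → Fin n → ℂ}

theorem differentiableOn_geodesicCombination (hf : ∀ i, IsComplexGeodesic D (f i)) :
    DifferentiableOn ℂ (geodesicCombination f) {p | ‖p.1‖ < 1} := fun _ hp =>
  (analyticAt_geodesicCombination fun i =>
    (hf i).1.analyticAt ((isOpen_lt continuous_norm continuous_const).mem_nhds hp))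
    |>.differentiableAt.differentiableWithinAt

theorem IsGeodesicLeftInverse.comp_geodesicCombination_eventuallyEq_fst (hD : IsOpen D)
    (hDc : Convex ℝ D) (hσ : ‖σ‖ < 1) (hσ0 : σ ≠ 0) (hf : ∀ i, IsComplexGeodesic D (f i))
    (hf0 : ∀ i, f i 0 = w) (hfσ : ∀ i, f i σ = z) {l₀ : ℂ} (hl₀ : ‖l₀‖ < 1)
    {s₀ : Fin m → ℝ} (hs₀0 : ∀ j, 0 < s₀ j) (hs₀1 : ∑ j, s₀ j < 1)
    {F : (Fin n → ℂ) → ℂ} (hF : IsGeodesicLeftInverse D σ w z F) :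
    (fun p => F (geodesicCombination f p)) =ᶠ[𝓝 (l₀, fun j => (s₀ j : ℂ))] Prod.fst := by
  set p₀ : ℂ × (Fin m → ℂ) := (l₀, fun j => (s₀ j : ℂ))
  set W := ({p : ℂ × (Fin m → ℂ) | ‖p.1‖ < 1} ∩ geodesicCombination f ⁻¹' D) ∩
    {p | (∀ j, 0 < (p.2 j).re) ∧ ∑ j, (p.2 j).re < 1}
  have hΦ := differentiableOn_geodesicCombination hf
  have hWopen : IsOpen W := by
    refine (hΦ.continuousOn.isOpen_inter_preimage (isOpen_lt (by fun_prop) continuous_const)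
      hD).inter ?_
    simp only [ofPred_and, ofPred_forall]
    exact (isOpen_iInter_of_finite fun j => isOpen_lt continuous_const (by fun_prop)).inter
      (isOpen_lt (by fun_prop) continuous_const)
  have hp₀W : p₀ ∈ W := by
    have hgeo := (isComplexGeodesic_geodesicCombination hDc hσ hσ0 hf hf0 hfσ
      (fun j => (hs₀0 j).le) hs₀1.le).1
    exact ⟨⟨hl₀, hgeo.2.1 l₀ hl₀⟩, by simpa [p₀] using hs₀0, by simpa [p₀] using hs₀1⟩
  obtain ⟨r, hr, hball⟩ := Metric.isOpen_iff.mp hWopen p₀ hp₀W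
  have hzero := eqOn_zero_of_eq_zero_of_im_eq_zero
    (h := fun p => F (geodesicCombination f p) - p.1) (p₀ := p₀) (r := r)
    (fun j => Complex.ofReal_im _)
    ((hF.1.comp (hΦ.mono fun p hp => (hball hp).1.1) fun p hp => (hball hp).1.2).sub
      differentiableOn_fst) (fun p hp him => ?_)
  · filter_upwards [ball_mem_nhds p₀ hr] with p hp
    exact sub_eq_zero.mp (hzero hp)
  obtain ⟨⟨hp1, -⟩, hpos, hsum⟩ := hball hp
  have hp_real : p = (p.1, fun j => ((p.2 j).re : ℂ)) :=
    Prod.ext rfl (funext fun j => Complex.ext (by simp) (by simp [him j]))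
  obtain ⟨hgeo, hg0, hgσ⟩ := isComplexGeodesic_geodesicCombination hDc hσ hσ0 hf hf0 hfσ
    (fun j => (hpos j).le) hsum.le
  rw [sub_eq_zero, hp_real]
  exact hF.2.2 _ hgeo hg0 hgσ p.1 hp1

theorem injective_of_hasFDerivAt_geodesicCombination {p₀ : ℂ × (Fin m → ℂ)}
    {A : ℂ × (Fin m → ℂ) →L[ℂ] Fin n → ℂ} (hΦ : HasFDerivAt (geodesicCombination f) A p₀)
    {F : (Fin n → ℂ) → ℂ} (hF : DifferentiableAt ℂ F (geodesicCombination f p₀))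
    (hev : (fun p => F (geodesicCombination f p)) =ᶠ[𝓝 p₀] Prod.fst)
    (haff : AffineIndependent ℂ fun i => f i p₀.1) : Function.Injective A := by
  set L : (Fin m → ℂ) →L[ℂ] Fin n → ℂ :=
    ∑ j, (ContinuousLinearMap.proj j).smulRight (f j.succ p₀.1 - f 0 p₀.1)
  have hfst : (fderiv ℂ F (geodesicCombination f p₀)).comp A = ContinuousLinearMap.fst ℂ _ _ :=
    ((hF.hasFDerivAt.comp p₀ hΦ).congr_of_eventuallyEq hev.symm).unique hasFDerivAt_fst
  have hsnd : A.comp (ContinuousLinearMap.inr ℂ _ _) = L := by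
    have hline : geodesicCombination f ∘ Prod.mk p₀.1 = fun s => f 0 p₀.1 + L s := by
      ext s; simp [geodesicCombination, L]
    have hΦ' : HasFDerivAt (geodesicCombination f) A (p₀.1, p₀.2) := hΦ
    exact (hΦ'.comp p₀.2 (hasFDerivAt_prodMk_right p₀.1 p₀.2)).unique
      (hline ▸ L.hasFDerivAt.const_add _)
  refine (injective_iff_map_eq_zero A).mpr fun x hx => ?_
  have hx1 : x.1 = 0 := by simpa [hx] using (ContinuousLinearMap.ext_iff.mp hfst x).symm
  have hLx : L x.2 = 0 := by
    rw [← hsnd, ContinuousLinearMap.comp_apply, ContinuousLinearMap.inr_apply, ← hx1, hx]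
  have hweights := haff.eq_zero_of_sum_eq_zero (s := Finset.univ)
    (w := (Fin.cons (-∑ j, x.2 j) x.2 : Fin (m + 1) → ℂ)) (by simp [Fin.sum_univ_succ])
    (by
      rw [← hLx]
      simp only [Fin.sum_univ_succ, Fin.cons_zero, Fin.cons_succ, neg_smul, Finset.sum_smul, L,
        _root_.sum_apply, ContinuousLinearMap.smulRight_apply,
        ContinuousLinearMap.proj_apply, smul_sub, Finset.sum_sub_distrib]
      abel)
  exact Prod.ext hx1 (funext fun j => by simpa using hweights j.succ (Finset.mem_univ _))

end LocalUniqueness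

theorem IsGeodesicLeftInverse.exists_mem_eventuallyEq {m : ℕ} {D : Set (Fin (m + 1) → ℂ)}
    (hD : IsOpen D) (hDc : Convex ℝ D) {σ : ℂ} (hσ : ‖σ‖ < 1) (hσ0 : σ ≠ 0)
    {w z : Fin (m + 1) → ℂ} {f : Fin (m + 1) → ℂ → Fin (m + 1) → ℂ}
    (hf : ∀ i, IsComplexGeodesic D (f i)) (hf0 : ∀ i, f i 0 = w) (hfσ : ∀ i, f i σ = z)
    {l₀ : ℂ} (hl₀ : ‖l₀‖ < 1) (haff : AffineIndependent ℂ fun i => f i l₀)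
    {F₁ F₂ : (Fin (m + 1) → ℂ) → ℂ} (hF₁ : IsGeodesicLeftInverse D σ w z F₁)
    (hF₂ : IsGeodesicLeftInverse D σ w z F₂) : ∃ x ∈ D, F₁ =ᶠ[𝓝 x] F₂ := by
  set s₀ : Fin m → ℝ := fun _ => ((m : ℝ) + 1)⁻¹
  have hs₀0 : ∀ j, 0 < s₀ j := fun _ => by positivity
  have hs₀1 : ∑ j, s₀ j < 1 := by
    simp only [s₀, Finset.sum_const, Finset.card_univ, Fintype.card_fin, nsmul_eq_mul]
    rw [← div_eq_mul_inv, div_lt_one (by positivity)]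
    linarith
  set p₀ : ℂ × (Fin m → ℂ) := (l₀, fun j => (s₀ j : ℂ))
  have hp₀D : geodesicCombination f p₀ ∈ D :=
    (isComplexGeodesic_geodesicCombination hDc hσ hσ0 hf hf0 hfσ (fun j => (hs₀0 j).le)
      hs₀1.le).1.2.1 l₀ hl₀
  have hev₁ :=
    hF₁.comp_geodesicCombination_eventuallyEq_fst hD hDc hσ hσ0 hf hf0 hfσ hl₀ hs₀0 hs₀1
  have hev₂ :=
    hF₂.comp_geodesicCombination_eventuallyEq_fst hD hDc hσ hσ0 hf hf0 hfσ hl₀ hs₀0 hs₀1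
  have hstrict := (analyticAt_geodesicCombination (p := p₀) fun i =>
    (hf i).1.analyticAt ((isOpen_lt continuous_norm continuous_const).mem_nhds hl₀))
    |>.hasStrictFDerivAt
  have hinj := injective_of_hasFDerivAt_geodesicCombination hstrict.hasFDerivAt
    (hF₁.1.differentiableAt (hD.mem_nhds hp₀D)) hev₁ haff
  have hsurj := (LinearMap.injective_iff_surjective_of_finrank_eq_finrank
    (by simp [Module.finrank_prod, add_comm])).mp hinj
  have hmap := hstrict.map_nhds_eq_of_surj (LinearMap.range_eq_top.mpr hsurj)
  refine ⟨_, hp₀D, ?_⟩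
  rw [EventuallyEq, ← hmap, eventually_map]
  filter_upwards [hev₁, hev₂] with p h₁ h₂
  rw [h₁, h₂]

theorem unique_left_inverse_convex_general {n : ℕ} (hn : 2 ≤ n)
    (D : Set (Fin n → ℂ)) (hDopen : IsOpen D) (hDconv : Convex ℝ D)
    (hDconn : IsConnected D)
    (σ : ℂ) (hσ : ‖σ‖ < 1) (hσ0 : σ ≠ 0)
    (w z : Fin n → ℂ)
    (f : Fin n → ℂ → Fin n → ℂ)
    (hgeo : ∀ i, IsComplexGeodesic D (f i))
    (h0 : ∀ i, f i 0 = w) (hσval : ∀ i, f i σ = z)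
    (hind : ∃ l0 : ℂ, ‖l0‖ < 1 ∧ AffineIndependent ℂ fun i : Fin n => f i l0) :
    ∃ F : (Fin n → ℂ) → ℂ,
      (DifferentiableOn ℂ F D ∧ (∀ x ∈ D, ‖F x‖ < 1) ∧
        ∀ g : ℂ → Fin n → ℂ, IsComplexGeodesic D g → g 0 = w → g σ = z →
          ∀ v : ℂ, ‖v‖ < 1 → F (g v) = v) ∧
      ∀ F' : (Fin n → ℂ) → ℂ,
        (DifferentiableOn ℂ F' D ∧ (∀ x ∈ D, ‖F' x‖ < 1) ∧
          ∀ g : ℂ → Fin n → ℂ, IsComplexGeodesic D g → g 0 = w → g σ = z →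
            ∀ v : ℂ, ‖v‖ < 1 → F' (g v) = v) →
        Set.EqOn F F' D := by
  obtain ⟨m, rfl⟩ : ∃ m, n = m + 1 := ⟨n - 1, by omega⟩
  obtain ⟨l₀, hl₀, haff⟩ := hind
  obtain ⟨F, hF⟩ := (hgeo 0).exists_isGeodesicLeftInverse (h0 0) (hσval 0) hσ hσ0
  refine ⟨F, hF, fun F' hF' => ?_⟩
  obtain ⟨x, hxD, hev⟩ :=
    hF.exists_mem_eventuallyEq hDopen hDconv hσ hσ0 hgeo h0 hσval hl₀ haff hF'
  exact eqOn_of_eventuallyEq_of_isPreconnected hDopen hDconn.isPreconnected hF.1 hF'.1 hxD hev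

/-- Let `D ⊆ ℂⁿ` (`n ≥ 2`) be a convex domain, `σ ∈ 𝔻 \ {0}`, and let
`f⁰, …, f^{n−1} : 𝔻 → D` be complex geodesics all sending `0 ↦ w` and `σ ↦ z`,
whose values at some `l0 ∈ 𝔻` are affinely independent (equivalently, the
differences `fʲ(l0) − f^{n-1}(l0)`, `j < n−1`, are linearly independent). Then
there is exactly one holomorphic `F : D → 𝔻` which is a left inverse of every
complex geodesic of `D` sending `0 ↦ w` and `σ ↦ z`. -/
theorem unique_left_inverse_convex {n : ℕ} (hn : 2 ≤ n)
    (D : Set (Fin n → ℂ)) (hDopen : IsOpen D) (hDconv : Convex ℝ D)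
    (hDconn : IsConnected D) (hDbd : Bornology.IsBounded D)
    (σ : ℂ) (hσ : ‖σ‖ < 1) (hσ0 : σ ≠ 0)
    (w z : Fin n → ℂ)
    (f : Fin n → ℂ → Fin n → ℂ)
    (hgeo : ∀ i, IsComplexGeodesic D (f i))
    (h0 : ∀ i, f i 0 = w) (hσval : ∀ i, f i σ = z)
    (hind : ∃ l0 : ℂ, ‖l0‖ < 1 ∧ AffineIndependent ℂ fun i : Fin n => f i l0) :
    ∃ F : (Fin n → ℂ) → ℂ,
      (DifferentiableOn ℂ F D ∧ (∀ x ∈ D, ‖F x‖ < 1) ∧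
        ∀ g : ℂ → Fin n → ℂ, IsComplexGeodesic D g → g 0 = w → g σ = z →
          ∀ v : ℂ, ‖v‖ < 1 → F (g v) = v) ∧
      ∀ F' : (Fin n → ℂ) → ℂ,
        (DifferentiableOn ℂ F' D ∧ (∀ x ∈ D, ‖F' x‖ < 1) ∧
          ∀ g : ℂ → Fin n → ℂ, IsComplexGeodesic D g → g 0 = w → g σ = z →
            ∀ v : ℂ, ‖v‖ < 1 → F' (g v) = v) →
        Set.EqOn F F' D :=
  unique_left_inverse_convex_general hn D hDopen hDconv hDconn σ hσ hσ0 w z f hgeo h0 hσval hind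
end
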